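/- arXiv:math/0601696 — 9 statements merged into one kernel-verified Lean document; each statement's English description precedes it below -/
import Mathlib

section
/- Let A be a bounded linear operator on a Hilbert space H, T = A*A, and a > 0. Then the operator norm of T_a^{-1} A* satisfies ‖(T + aI)^{-1} A*‖ ≤ 1/(2√a). -/
/-!
Put `y = (T + a)⁻¹ A* x`. Pairing `A* A y + a y = A* x` with `y` gives
`‖A y‖² + a ‖y‖² = Re ⟪x, A y⟫ ≤ ‖x‖ ‖A y‖`, and completing the square in `‖A y‖`
yields `4 a ‖y‖² ≤ ‖x‖²`.
-/

open ContinuousLinearMap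
open scoped InnerProductSpace

theorem two_mul_sqrt_mul_le_of_sq_add_mul_sq_le {a u v c : ℝ} (ha : 0 ≤ a) (hv : 0 ≤ v)
    (hc : 0 ≤ c) (h : u ^ 2 + a * v ^ 2 ≤ c * u) : 2 * √a * v ≤ c := by
  have hsq : (2 * √a * v) ^ 2 ≤ c ^ 2 := by
    rw [mul_pow, mul_pow, Real.sq_sqrt ha]
    nlinarith [sq_nonneg (2 * u - c)]
  exact pow_le_pow_iff_left₀ (by positivity) hc two_ne_zero |>.mp hsq

section Adjoint

variable {𝕜 E F : Type*} [RCLike 𝕜] [NormedAddCommGroup E] [InnerProductSpace 𝕜 E]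
  [CompleteSpace E] [NormedAddCommGroup F] [InnerProductSpace 𝕜 F] [CompleteSpace F]

theorem norm_sq_add_mul_norm_sq_le_of_adjoint_comp_add_smul_eq (A : E →L[𝕜] F) (a : ℝ)
    {x : F} {y : E} (h : adjoint A (A y) + (a : 𝕜) • y = adjoint A x) :
    ‖A y‖ ^ 2 + a * ‖y‖ ^ 2 ≤ ‖x‖ * ‖A y‖ := by
  have hpair : RCLike.re ⟪adjoint A (A y) + (a : 𝕜) • y, y⟫_𝕜 = ‖A y‖ ^ 2 + a * ‖y‖ ^ 2 := by
    rw [inner_add_left, inner_smul_left, adjoint_inner_left, inner_self_eq_norm_sq_to_K,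
      inner_self_eq_norm_sq_to_K, map_add, RCLike.conj_ofReal, ← RCLike.ofReal_pow,
      ← RCLike.ofReal_pow, ← RCLike.ofReal_mul, RCLike.ofReal_re, RCLike.ofReal_re]
  calc ‖A y‖ ^ 2 + a * ‖y‖ ^ 2 = RCLike.re ⟪x, A y⟫_𝕜 := by
        rw [← hpair, h, adjoint_inner_left]
    _ ≤ ‖x‖ * ‖A y‖ := re_inner_le_norm x (A y)

theorem two_mul_sqrt_mul_norm_le_of_adjoint_comp_add_smul_eq (A : E →L[𝕜] F) {a : ℝ}
    (ha : 0 ≤ a) {x : F} {y : E} (h : adjoint A (A y) + (a : 𝕜) • y = adjoint A x) :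
    2 * √a * ‖y‖ ≤ ‖x‖ :=
  two_mul_sqrt_mul_le_of_sq_add_mul_sq_le ha (norm_nonneg y) (norm_nonneg x)
    (norm_sq_add_mul_norm_sq_le_of_adjoint_comp_add_smul_eq A a h)

end Adjoint

theorem norm_Tainv_adjoint_le_general
    {H : Type*} [NormedAddCommGroup H] [InnerProductSpace ℂ H] [CompleteSpace H]
    (A : H →L[ℂ] H) (a : ℝ) (ha : 0 < a)
    (T : H →L[ℂ] H) (hT : T = (adjoint A) ∘L A)
    (B : H →L[ℂ] H)
    (hB₂ : (T + (a : ℂ) • 1) ∘L B = 1) :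
    ‖B ∘L adjoint A‖ ≤ 1 / (2 * Real.sqrt a) := by
  refine opNorm_le_bound _ (by positivity) fun x => ?_
  have hy : adjoint A (A (B (adjoint A x))) + (a : ℂ) • B (adjoint A x) = adjoint A x := by
    simpa [hT] using congr(($hB₂) (adjoint A x))
  rw [comp_apply, one_div_mul_eq_div, le_div_iff₀ (by positivity), mul_comm]
  exact two_mul_sqrt_mul_norm_le_of_adjoint_comp_add_smul_eq A ha.le hy

/-- For a bounded linear operator `A` on a complex Hilbert space, `T = A* A` and `a > 0`,
the operator `(T + aI)⁻¹ A*` has norm at most `1/(2√a)`. -/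
theorem norm_Tainv_adjoint_le
    {H : Type*} [NormedAddCommGroup H] [InnerProductSpace ℂ H] [CompleteSpace H]
    (A : H →L[ℂ] H) (a : ℝ) (ha : 0 < a)
    (T : H →L[ℂ] H) (hT : T = (adjoint A) ∘L A)
    (B : H →L[ℂ] H)
    (hB₁ : B ∘L (T + (a : ℂ) • 1) = 1) (hB₂ : (T + (a : ℂ) • 1) ∘L B = 1) :
    ‖B ∘L adjoint A‖ ≤ 1 / (2 * Real.sqrt a) :=
  norm_Tainv_adjoint_le_general A a ha T hT B hB₂
end

section
/- Let T ≥ 0 be a bounded selfadjoint operator on a Hilbert space H and y ∈ H. Then lim_{a→0+} ‖a (T + aI)^{-1} y − P_N y‖ = 0, where P_N is the orthogonal projection onto N(T). In particular, if y ⊥ N(T), then lim_{a→0+} a‖(T + aI)^{-1} y‖ = 0. -/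
/-!
Write `w = y - P_N y`. Since `T` is selfadjoint, `N(T)ᗮ` is the closure of `range T`, so `w` lies in
that closure, while `a (T + aI)⁻¹` fixes `P_N y`. Nonnegativity of `T` gives `‖a (T + aI)⁻¹‖ ≤ 1`,
and on `range T` we have `a (T + aI)⁻¹ T v = a v - a² (T + aI)⁻¹ v = O(a)`. A uniformly bounded
family of operators tending to `0` on a set tends to `0` on its closure, so `a (T + aI)⁻¹ w → 0`.
-/

open ContinuousLinearMap Filter Topology

theorem tendsto_apply_zero_of_mem_closure {𝕜 E F ι : Type*} [NontriviallyNormedField 𝕜]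
    [SeminormedAddCommGroup E] [NormedSpace 𝕜 E] [SeminormedAddCommGroup F] [NormedSpace 𝕜 F]
    {l : Filter ι} {A : ι → E →L[𝕜] F} {C : ℝ} (hA : ∀ᶠ i in l, ‖A i‖ ≤ C) {S : Set E}
    (hS : ∀ z ∈ S, Tendsto (fun i => A i z) l (𝓝 0)) {w : E} (hw : w ∈ closure S) :
    Tendsto (fun i => A i w) l (𝓝 0) := by
  rw [Metric.tendsto_nhds]
  intro ε hε
  obtain ⟨z, hzS, hwz⟩ := Metric.mem_closure_iff.mp hw (ε / (2 * (|C| + 1))) (by positivity)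
  rw [dist_eq_norm] at hwz
  filter_upwards [hA, Metric.tendsto_nhds.mp (hS z hzS) (ε / 2) (half_pos hε)] with i hAi hz
  rw [dist_zero_right] at hz ⊢
  calc ‖A i w‖ ≤ ‖A i (w - z)‖ + ‖A i z‖ := by
        simpa only [map_sub, sub_add_cancel] using norm_add_le (A i (w - z)) (A i z)
    _ ≤ (|C| + 1) * ‖w - z‖ + ‖A i z‖ := by
        gcongr
        exact (A i).le_of_opNorm_le (hAi.trans ((le_abs_self C).trans (le_add_of_nonneg_right
          zero_le_one))) _
    _ < (|C| + 1) * (ε / (2 * (|C| + 1))) + ε / 2 := by gcongr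
    _ = ε := by field_simp; ring

theorem IsSelfAdjoint.mem_closure_range_of_forall_inner_eq_zero {𝕜 E : Type*} [RCLike 𝕜]
    [NormedAddCommGroup E] [InnerProductSpace 𝕜 E] [CompleteSpace E] {T : E →L[𝕜] E}
    (hT : IsSelfAdjoint T) {w : E} (hw : ∀ u, T u = 0 → inner 𝕜 u w = 0) :
    w ∈ closure (Set.range T) := by
  have hw' : w ∈ T.kerᗮ := fun u hu => hw u hu
  rw [T.orthogonal_ker, hT.adjoint_eq, ← SetLike.mem_coe, Submodule.topologicalClosure_coe,
    LinearMap.coe_range, coe_coe] at hw'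
  exact hw'

section Resolvent

variable {𝕜 E : Type*} [RCLike 𝕜] [NormedAddCommGroup E] [InnerProductSpace 𝕜 E]
  {T B : E →L[𝕜] E} {a : ℝ}

theorem mul_norm_le_norm_of_apply_add_smul_eq (hT : ∀ x, 0 ≤ RCLike.re (inner 𝕜 (T x) x))
    {u x : E} (h : T u + (a : 𝕜) • u = x) : a * ‖u‖ ≤ ‖x‖ := by
  have hre : a * ‖u‖ ^ 2 ≤ RCLike.re (inner 𝕜 x u) := by
    rw [← h, inner_add_left, inner_smul_left, map_add, RCLike.conj_ofReal,
      inner_self_eq_norm_sq_to_K, ← RCLike.ofReal_pow, ← RCLike.ofReal_mul, RCLike.ofReal_re]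
    linarith [hT u]
  have hle : a * ‖u‖ ^ 2 ≤ ‖x‖ * ‖u‖ :=
    hre.trans ((RCLike.re_le_norm _).trans (norm_inner_le_norm x u))
  rcases (norm_nonneg u).eq_or_lt with hu | hu
  · rw [← hu, mul_zero]; exact norm_nonneg x
  · nlinarith

theorem norm_smul_le_one_of_add_smul_one_comp_eq_one
    (hT : ∀ x, 0 ≤ RCLike.re (inner 𝕜 (T x) x)) (ha : 0 ≤ a)
    (hB : (T + (a : 𝕜) • 1) ∘L B = 1) : ‖(a : 𝕜) • B‖ ≤ 1 := by
  refine opNorm_le_bound _ zero_le_one fun x => ?_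
  rw [smul_apply, norm_smul, RCLike.norm_ofReal, abs_of_nonneg ha, one_mul]
  exact mul_norm_le_norm_of_apply_add_smul_eq hT (by simpa using congr($hB x))

theorem smul_apply_eq_self_of_comp_add_smul_one_eq_one (hB : B ∘L (T + (a : 𝕜) • 1) = 1)
    {v : E} (hv : T v = 0) : (a : 𝕜) • B v = v := by
  simpa [hv] using congr($hB v)

theorem norm_smul_apply_apply_le (hT : ∀ x, 0 ≤ RCLike.re (inner 𝕜 (T x) x)) (ha : 0 ≤ a)
    (hBl : B ∘L (T + (a : 𝕜) • 1) = 1) (hBr : (T + (a : 𝕜) • 1) ∘L B = 1) (v : E) :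
    ‖(a : 𝕜) • B (T v)‖ ≤ 2 * a * ‖v‖ := by
  have hBT : B (T v) = v - (a : 𝕜) • B v := by
    rw [eq_sub_iff_add_eq, ← map_smul, ← map_add]
    simpa using congr($hBl v)
  have hnorm : ‖(a : 𝕜) • B v‖ ≤ ‖v‖ :=
    (((a : 𝕜) • B).le_of_opNorm_le
      (norm_smul_le_one_of_add_smul_one_comp_eq_one hT ha hBr) v).trans_eq (one_mul _)
  calc ‖(a : 𝕜) • B (T v)‖ = a * ‖v - (a : 𝕜) • B v‖ := by
        rw [hBT, norm_smul, RCLike.norm_ofReal, abs_of_nonneg ha]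
    _ ≤ a * (‖v‖ + ‖v‖) := by gcongr; exact (norm_sub_le _ _).trans (by gcongr)
    _ = 2 * a * ‖v‖ := by ring

theorem tendsto_smul_apply_apply_nhdsGT_zero (hT : ∀ x, 0 ≤ RCLike.re (inner 𝕜 (T x) x))
    {B : ℝ → E →L[𝕜] E}
    (hB : ∀ a : ℝ, 0 < a → B a ∘L (T + (a : 𝕜) • 1) = 1 ∧ (T + (a : 𝕜) • 1) ∘L B a = 1)
    (v : E) : Tendsto (fun a : ℝ => ((a : 𝕜) • B a) (T v)) (𝓝[>] 0) (𝓝 0) := by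
  have hlin : Tendsto (fun a : ℝ => 2 * a * ‖v‖) (𝓝[>] 0) (𝓝 0) :=
    tendsto_nhdsWithin_of_tendsto_nhds
      (by simpa using ((continuous_id.const_mul 2).mul_const ‖v‖).tendsto 0)
  refine squeeze_zero_norm' ?_ hlin
  filter_upwards [self_mem_nhdsWithin] with a ha
  exact norm_smul_apply_apply_le hT (le_of_lt ha) (hB a ha).1 (hB a ha).2 v

end Resolvent

/-- For nonnegative bounded selfadjoint `T`, `a(T+aI)⁻¹ y → P_N y` as `a → 0⁺`, where
`P_N` is the orthogonal projection onto `N(T)`; in particular if `y ⊥ N(T)` then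
`a‖(T+aI)⁻¹ y‖ → 0`. -/
theorem tendsto_a_Tainv_to_proj
    {H : Type*} [NormedAddCommGroup H] [InnerProductSpace ℂ H] [CompleteSpace H]
    (T : H →L[ℂ] H) (hT : IsSelfAdjoint T)
    (hpos : ∀ x : H, 0 ≤ (inner ℂ (T x) x : ℂ).re)
    (P : H →L[ℂ] H)
    (hP : ∀ x : H, T (P x) = 0 ∧ ∀ u : H, T u = 0 → (inner ℂ u (x - P x) : ℂ) = 0)
    (y : H)
    (B : ℝ → H →L[ℂ] H)
    (hB : ∀ a : ℝ, 0 < a →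
      B a ∘L (T + (a : ℂ) • 1) = 1 ∧ (T + (a : ℂ) • 1) ∘L B a = 1) :
    Tendsto (fun a : ℝ => ‖(a : ℂ) • B a y - P y‖) (𝓝[>] 0) (𝓝 0) ∧
    ((∀ u : H, T u = 0 → (inner ℂ u y : ℂ) = 0) →
      Tendsto (fun a : ℝ => a * ‖B a y‖) (𝓝[>] 0) (𝓝 0)) := by
  have hbound : ∀ᶠ a : ℝ in 𝓝[>] 0, ‖(a : ℂ) • B a‖ ≤ 1 :=
    eventually_mem_nhdsWithin.mono fun a ha =>
      norm_smul_le_one_of_add_smul_one_comp_eq_one hpos (le_of_lt ha) (hB a ha).2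
  have hlim := tendsto_apply_zero_of_mem_closure hbound
    (Set.forall_mem_range.mpr (tendsto_smul_apply_apply_nhdsGT_zero hpos hB))
    (hT.mem_closure_range_of_forall_inner_eq_zero (hP y).2)
  have hfirst : Tendsto (fun a : ℝ => ‖(a : ℂ) • B a y - P y‖) (𝓝[>] 0) (𝓝 0) := by
    refine (tendsto_zero_iff_norm_tendsto_zero.mp hlim).congr' ?_
    filter_upwards [self_mem_nhdsWithin] with a ha
    rw [smul_apply, map_sub, smul_sub]
    congr 2
    exact smul_apply_eq_self_of_comp_add_smul_one_eq_one (hB a ha).1 (hP y).1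
  refine ⟨hfirst, fun hperp => ?_⟩
  have hPy : P y = 0 := by
    have h := (hP y).2 (P y) (hP y).1
    rwa [inner_sub_right, hperp (P y) (hP y).1, zero_sub, neg_eq_zero, inner_self_eq_zero] at h
  refine hfirst.congr' ?_
  filter_upwards [self_mem_nhdsWithin] with a ha
  rw [hPy, sub_zero, norm_smul, Complex.norm_real, Real.norm_of_nonneg (le_of_lt ha)]
end

section
/- Let A be a bounded selfadjoint operator on a Hilbert space H, and y ∈ H orthogonal to N(A). Then lim_{a→0+} a‖(A + ia)^{-1} y‖ = 0, where i is the imaginary unit and a > 0. -/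
/-! Since `A` is symmetric, `‖(A + ia)u‖² = ‖Au‖² + a²‖u‖²`, so the operators `a (A + ia)⁻¹` have
norm at most `1`. On the range of `A` they tend to `0` strongly, because
`a (A + ia)⁻¹ Az = az - ia · a (A + ia)⁻¹ z`. A uniformly bounded family of operators that tends to
`0` on a set tends to `0` on its closure, and `N(A)ᗮ` is the closure of the range of `A`. -/

open ContinuousLinearMap Filter Topology

theorem tendsto_apply_of_norm_le_of_mem_closure {𝕜 E F ι : Type*} [NontriviallyNormedField 𝕜]
    [SeminormedAddCommGroup E] [NormedSpace 𝕜 E] [SeminormedAddCommGroup F] [NormedSpace 𝕜 F]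
    {l : Filter ι} {T : ι → E →L[𝕜] F} {C : ℝ} (hT : ∀ᶠ i in l, ‖T i‖ ≤ C) {s : Set E}
    (hs : ∀ x ∈ s, Tendsto (fun i ↦ T i x) l (𝓝 0)) {x : E} (hx : x ∈ closure s) :
    Tendsto (fun i ↦ T i x) l (𝓝 0) := by
  rw [Metric.tendsto_nhds]
  intro ε hε
  have hC : 0 < |C| + 1 := by positivity
  obtain ⟨x', hx's, hxx'⟩ := Metric.mem_closure_iff.mp hx (ε / 2 / (|C| + 1)) (by positivity)
  filter_upwards [hT, Metric.tendsto_nhds.mp (hs x' hx's) (ε / 2) (half_pos hε)] with i hTi hx'i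
  rw [dist_zero_right] at hx'i ⊢
  rw [dist_eq_norm, lt_div_iff₀ hC] at hxx'
  calc ‖T i x‖ ≤ ‖T i (x - x')‖ + ‖T i x'‖ := by
        simpa only [map_sub, sub_add_cancel] using norm_add_le (T i (x - x')) (T i x')
    _ ≤ (|C| + 1) * ‖x - x'‖ + ‖T i x'‖ := by
        gcongr
        exact (T i).le_of_opNorm_le (by linarith [le_abs_self C]) _
    _ < ε / 2 + ε / 2 := by linarith
    _ = ε := add_halves ε

section Resolvent

variable {H : Type*} [NormedAddCommGroup H] [InnerProductSpace ℂ H]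

namespace LinearMap.IsSymmetric

theorem norm_add_I_mul_smul_sq {T : H →ₗ[ℂ] H} (hT : T.IsSymmetric) (a : ℝ) (u : H) :
    ‖T u + (Complex.I * a) • u‖ ^ 2 = ‖T u‖ ^ 2 + (a * ‖u‖) ^ 2 := by
  have hre : RCLike.re (inner ℂ (T u) ((Complex.I * a) • u)) = 0 := by
    rw [inner_smul_right]
    simp [hT.im_inner_apply_self]
  rw [@norm_add_sq ℂ, hre, norm_smul]
  simp [mul_pow]

variable {A : H →L[ℂ] H} (a : ℝ)

theorem abs_mul_norm_le_norm_add_I_mul_smul_apply (hA : (A : H →ₗ[ℂ] H).IsSymmetric) (u : H) :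
    |a| * ‖u‖ ≤ ‖(A + (Complex.I * a) • 1) u‖ := by
  refine (pow_le_pow_iff_left₀ (by positivity) (norm_nonneg _) two_ne_zero).mp ?_
  calc (|a| * ‖u‖) ^ 2 = (a * ‖u‖) ^ 2 := by rw [mul_pow, sq_abs, mul_pow]
    _ ≤ ‖A u‖ ^ 2 + (a * ‖u‖) ^ 2 := le_add_of_nonneg_left (sq_nonneg _)
    _ = ‖(A + (Complex.I * a) • 1) u‖ ^ 2 := by
        simpa using (hA.norm_add_I_mul_smul_sq a u).symm

theorem norm_smul_le_one_of_comp_eq_one (hA : (A : H →ₗ[ℂ] H).IsSymmetric) {R : H →L[ℂ] H}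
    (hR : (A + (Complex.I * a) • 1) ∘L R = 1) : ‖(a : ℂ) • R‖ ≤ 1 := by
  refine opNorm_le_bound _ zero_le_one fun v ↦ ?_
  calc ‖((a : ℂ) • R) v‖ = |a| * ‖R v‖ := by simp [norm_smul]
    _ ≤ ‖(A + (Complex.I * a) • 1) (R v)‖ := hA.abs_mul_norm_le_norm_add_I_mul_smul_apply a (R v)
    _ = 1 * ‖v‖ := by simpa using congr(‖$hR v‖)

theorem norm_smul_inverse_apply_le (hA : (A : H →ₗ[ℂ] H).IsSymmetric) {R : H →L[ℂ] H}
    (hRl : R ∘L (A + (Complex.I * a) • 1) = 1)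
    (hRr : (A + (Complex.I * a) • 1) ∘L R = 1) (z : H) :
    ‖((a : ℂ) • R) (A z)‖ ≤ 2 * |a| * ‖z‖ := by
  have hz : R (A z) = z - (Complex.I * a) • R z := by
    simpa [eq_sub_iff_add_eq] using congr($hRl z)
  have hR := hA.norm_smul_le_one_of_comp_eq_one a hRr
  calc ‖((a : ℂ) • R) (A z)‖ = ‖(a : ℂ) • z - (Complex.I * a) • ((a : ℂ) • R) z‖ := by
        simp only [_root_.smul_apply, hz, smul_sub, smul_comm (a : ℂ)]
    _ ≤ |a| * ‖z‖ + |a| * ‖z‖ := by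
        refine (norm_sub_le _ _).trans (add_le_add (by simp [norm_smul]) ?_)
        rw [norm_smul]
        simpa using mul_le_mul_of_nonneg_left (le_of_opNorm_le _ hR z) (abs_nonneg a)
    _ = 2 * |a| * ‖z‖ := by ring

end LinearMap.IsSymmetric

theorem IsSelfAdjoint.orthogonal_ker_eq_closure_range [CompleteSpace H] {A : H →L[ℂ] H}
    (hA : IsSelfAdjoint A) :
    (A : H →ₗ[ℂ] H).kerᗮ = (A : H →ₗ[ℂ] H).range.topologicalClosure := by
  rw [orthogonal_ker, hA.adjoint_eq]

end Resolvent

/-- For bounded selfadjoint `A` and `y ⊥ N(A)`, `a‖(A + ia)⁻¹ y‖ → 0` as `a → 0⁺`. -/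
theorem tendsto_a_Aiainv_y
    {H : Type*} [NormedAddCommGroup H] [InnerProductSpace ℂ H] [CompleteSpace H]
    (A : H →L[ℂ] H) (hA : IsSelfAdjoint A)
    (y : H) (hy : ∀ u : H, A u = 0 → (inner ℂ u y : ℂ) = 0)
    (R : ℝ → H →L[ℂ] H)
    (hR : ∀ a : ℝ, 0 < a →
      R a ∘L (A + (Complex.I * a) • 1) = 1 ∧ (A + (Complex.I * a) • 1) ∘L R a = 1) :
    Tendsto (fun a : ℝ => a * ‖R a y‖) (𝓝[>] 0) (𝓝 0) := by
  have hsymm := hA.isSymmetric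
  have hbound : ∀ᶠ a : ℝ in 𝓝[>] 0, ‖(a : ℂ) • R a‖ ≤ 1 :=
    eventually_nhdsWithin_of_forall fun a ha ↦
      hsymm.norm_smul_le_one_of_comp_eq_one a (hR a ha).2
  have hrange : ∀ x ∈ (A : H →ₗ[ℂ] H).range,
      Tendsto (fun a : ℝ ↦ ((a : ℂ) • R a) x) (𝓝[>] 0) (𝓝 0) := by
    rintro _ ⟨z, rfl⟩
    have hlim : Tendsto (fun a : ℝ ↦ 2 * |a| * ‖z‖) (𝓝[>] 0) (𝓝 0) :=
      tendsto_nhdsWithin_of_tendsto_nhds <|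
        ((continuous_const.mul continuous_abs).mul continuous_const).tendsto' 0 0 (by simp)
    refine squeeze_zero_norm' ?_ hlim
    filter_upwards [self_mem_nhdsWithin] with a ha
    exact hsymm.norm_smul_inverse_apply_le a (hR a ha).1 (hR a ha).2 z
  have hy_closure : y ∈ closure ((A : H →ₗ[ℂ] H).range : Set H) := by
    rw [← Submodule.topologicalClosure_coe, ← hA.orthogonal_ker_eq_closure_range]
    exact hy
  have hlim := (tendsto_apply_of_norm_le_of_mem_closure hbound hrange hy_closure).norm
  rw [norm_zero] at hlim
  refine hlim.congr' ?_
  filter_upwards [self_mem_nhdsWithin] with a (ha : 0 < a)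
  simp [norm_smul, abs_of_pos ha]
end

section
/- Let A be a bounded selfadjoint operator on a Hilbert space H, f = Ay with y ⊥ N(A). For a > 0, let u_a(t) = [i(A+ia)]^{-1}(e^{i(A+ia)t} − I)(−if) be the solution of u̇ = i(A+ia)u − if, u(0) = 0. Then lim_{a→0+} lim_{t→∞} u_a(t) = y (iterated limit in norm). -/
open ContinuousLinearMap Filter Topology Complex

/-!
Write `B a = A + i a`. The left-inverse identity `R a (A w) = w - i a R a w` gives
`R a f = y - i a R a y`, and since `‖B a w‖² = ‖A w‖² + a² ‖w‖²` for selfadjoint `A`, the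
operators `i a R a` have norm at most `1`. On vectors `A z` they tend to `0` as `a → 0⁺`, hence
on the closure of the range of `A`, which is `N(A)ᗮ`; so `R a f → y`. For fixed `a > 0`,
`e^{i t B a} = e^{-a t} e^{i t A}` with `e^{i t A}` unitary, so `u a t → R a f` as `t → ∞`.
-/

theorem tendsto_apply_nhds_zero_of_mem_closure {ι 𝕜 E F : Type*}
    [NontriviallyNormedField 𝕜] [SeminormedAddCommGroup E] [SeminormedAddCommGroup F]
    [NormedSpace 𝕜 E] [NormedSpace 𝕜 F]
    {l : Filter ι} {T : ι → E →L[𝕜] F} {C : ℝ} (hC : ∀ᶠ i in l, ‖T i‖ ≤ C) {s : Set E}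
    (hs : ∀ x ∈ s, Tendsto (fun i => T i x) l (𝓝 0)) {y : E} (hy : y ∈ closure s) :
    Tendsto (fun i => T i y) l (𝓝 0) := by
  rw [Metric.tendsto_nhds]
  intro ε hε
  obtain ⟨x, hxs, hyx⟩ := Metric.mem_closure_iff.1 hy (ε / 2 / (|C| + 1)) (by positivity)
  filter_upwards [hC, Metric.tendsto_nhds.1 (hs x hxs) (ε / 2) (half_pos hε)] with i hCi hxi
  rw [dist_zero_right] at hxi ⊢
  rw [dist_eq_norm, lt_div_iff₀ (by positivity)] at hyx
  calc ‖T i y‖ ≤ ‖T i (y - x)‖ + ‖T i x‖ := by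
        simpa using norm_add_le (T i (y - x)) (T i x)
    _ ≤ (|C| + 1) * ‖y - x‖ + ‖T i x‖ := by
        gcongr
        exact (T i).le_of_opNorm_le (by linarith [le_abs_self C]) _
    _ < ε := by linarith

theorem apply_eq_sub_smul_of_comp_add_smul_one_eq_one {𝕜 E : Type*} [NormedField 𝕜]
    [NormedAddCommGroup E] [NormedSpace 𝕜 E] {A R : E →L[𝕜] E} {c : 𝕜}
    (hR : R ∘L (A + c • 1) = 1) (w : E) : R (A w) = w - c • R w := by
  have := congr($hR w)
  simp only [comp_apply, add_apply, smul_apply, one_apply_eq_self, map_add, map_smul] at this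
  exact eq_sub_of_add_eq this

section

variable {H : Type*} [NormedAddCommGroup H] [InnerProductSpace ℂ H] [CompleteSpace H]
  {A : H →L[ℂ] H}

theorem IsSelfAdjoint.norm_add_I_mul_smul_one_apply_sq (hA : IsSelfAdjoint A) (a : ℝ) (w : H) :
    ‖(A + (I * a) • 1) w‖ ^ 2 = ‖A w‖ ^ 2 + (a * ‖w‖) ^ 2 := by
  have hre : RCLike.re (inner ℂ (A w) ((I * a) • w)) = 0 := by
    have him : (inner ℂ (A w) w).im = 0 := by
      rw [← inner_conj_symm, conj_im, neg_eq_zero]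
      exact hA.isSymmetric.im_inner_self_apply w
    simp [him]
  rw [add_apply, smul_apply, one_apply_eq_self, @norm_add_sq ℂ, hre, norm_smul]
  simp [mul_pow]

theorem IsSelfAdjoint.abs_mul_norm_le_norm_add_I_mul_smul_one_apply (hA : IsSelfAdjoint A)
    (a : ℝ) (w : H) : |a| * ‖w‖ ≤ ‖(A + (I * a) • 1) w‖ := by
  refine (pow_le_pow_iff_left₀ (by positivity) (norm_nonneg _) two_ne_zero).1 ?_
  rw [mul_pow, sq_abs, hA.norm_add_I_mul_smul_one_apply_sq, mul_pow]
  nlinarith [sq_nonneg ‖A w‖]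

theorem IsSelfAdjoint.norm_I_mul_smul_apply_le (hA : IsSelfAdjoint A) {R : H →L[ℂ] H} {a : ℝ}
    (hR : (A + (I * a) • 1) ∘L R = 1) (x : H) : ‖(I * a) • R x‖ ≤ ‖x‖ := by
  have h := hA.abs_mul_norm_le_norm_add_I_mul_smul_one_apply a (R x)
  rw [← comp_apply, hR, one_apply_eq_self, ← Real.norm_eq_abs, ← norm_real] at h
  rwa [norm_smul, norm_mul, norm_I, one_mul]

theorem IsSelfAdjoint.mem_closure_range_of_mem_orthogonal_ker (hA : IsSelfAdjoint A) {y : H}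
    (hy : y ∈ A.kerᗮ) : y ∈ closure (Set.range A) := by
  rw [orthogonal_ker, hA.adjoint_eq, ← SetLike.mem_coe, Submodule.topologicalClosure_coe,
    LinearMap.coe_range, coe_coe] at hy
  exact hy

theorem IsSelfAdjoint.norm_exp_smul_I_smul_add_apply (hA : IsSelfAdjoint A) (a t : ℝ) (x : H) :
    ‖NormedSpace.exp ((t : ℂ) • (I • (A + (I * a) • 1))) x‖ = Real.exp (-(t * a)) * ‖x‖ := by
  have hsplit : (t : ℂ) • (I • (A + (I * a) • 1))
      = algebraMap ℂ (H →L[ℂ] H) ((-(t * a) : ℝ) : ℂ) + ((t : ℂ) * I) • A := by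
    rw [Algebra.algebraMap_eq_smul_one, smul_add, smul_add, smul_smul, smul_smul, smul_smul,
      add_comm]
    congr 2
    push_cast
    linear_combination (t * a : ℂ) * I_sq
  have hskew : ((t : ℂ) * I) • A ∈ skewAdjoint (H →L[ℂ] H) :=
    hA.smul_mem_skewAdjoint (by simp [skewAdjoint.mem_iff])
  -- The exponential lemmas below need a `NormedAlgebra ℚ` structure that instance search misses.
  let +nondep : NormedAlgebra ℚ (H →L[ℂ] H) := .restrictScalars ℚ ℂ (H →L[ℂ] H)
  have hU : NormedSpace.exp ((t * I : ℂ) • A) ∈ unitary (H →L[ℂ] H) :=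
    NormedSpace.exp_mem_unitary_of_mem_skewAdjoint hskew
  rw [hsplit, NormedSpace.exp_add_of_commute (Algebra.commutes _ _),
    ← NormedSpace.algebraMap_exp_comm (𝕂 := ℂ) (𝔸 := H →L[ℂ] H), mul_apply_eq_comp,
    Algebra.algebraMap_eq_smul_one, smul_apply, one_apply_eq_self, norm_smul,
    norm_map_of_mem_unitary hU, ← Complex.exp_eq_exp_ℂ, Complex.norm_exp_ofReal]

theorem IsSelfAdjoint.tendsto_exp_smul_I_smul_add_apply_atTop (hA : IsSelfAdjoint A) {a : ℝ}
    (ha : 0 < a) (x : H) :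
    Tendsto (fun t : ℝ => NormedSpace.exp ((t : ℂ) • (I • (A + (I * a) • 1))) x) atTop
      (𝓝 0) := by
  refine squeeze_zero_norm (fun t => (hA.norm_exp_smul_I_smul_add_apply a t x).le) ?_
  simpa using ((Real.tendsto_exp_atBot.comp
    (tendsto_neg_atTop_atBot.comp (tendsto_id.atTop_mul_const ha))).mul_const ‖x‖)

theorem IsSelfAdjoint.tendsto_I_mul_smul_resolvent_apply_nhdsGT_zero (hA : IsSelfAdjoint A)
    {R : ℝ → H →L[ℂ] H} (hR : ∀ a : ℝ, 0 < a →
      R a ∘L (A + (I * a) • 1) = 1 ∧ (A + (I * a) • 1) ∘L R a = 1)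
    {y : H} (hy : y ∈ closure (Set.range A)) :
    Tendsto (fun a : ℝ => (I * a) • R a y) (𝓝[>] 0) (𝓝 0) := by
  have hbound : ∀ a : ℝ, 0 < a → ∀ x, ‖(I * a) • R a x‖ ≤ ‖x‖ := fun a ha =>
    hA.norm_I_mul_smul_apply_le (hR a ha).2
  refine tendsto_apply_nhds_zero_of_mem_closure (T := fun a : ℝ => (I * a) • R a) (C := 1)
    ?_ ?_ hy
  · filter_upwards [self_mem_nhdsWithin] with a ha
    exact opNorm_le_bound _ zero_le_one fun x => by simpa using hbound a ha x
  · rintro _ ⟨z, rfl⟩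
    have hlim : Tendsto (fun a : ℝ => 2 * a * ‖z‖) (𝓝[>] 0) (𝓝 0) :=
      tendsto_nhdsWithin_of_tendsto_nhds <| by
        simpa using ((tendsto_id (x := 𝓝 (0 : ℝ))).const_mul 2).mul_const ‖z‖
    refine squeeze_zero_norm' ?_ hlim
    filter_upwards [self_mem_nhdsWithin] with a (ha : 0 < a)
    have hIa : ‖I * (a : ℂ)‖ = a := by simp [ha.le]
    calc ‖((I * a) • R a) (A z)‖ = ‖(I * a) • z - (I * a) • ((I * a) • R a z)‖ := by
          rw [smul_apply, apply_eq_sub_smul_of_comp_add_smul_one_eq_one (hR a ha).1, smul_sub]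
      _ ≤ ‖(I * a) • z‖ + ‖(I * a) • ((I * a) • R a z)‖ := norm_sub_le _ _
      _ ≤ a * ‖z‖ + a * ‖z‖ := by
          rw [norm_smul, norm_smul (I * (a : ℂ)) ((I * a) • R a z), hIa]
          gcongr
          exact hbound a ha z
      _ = 2 * a * ‖z‖ := by ring

end

/-- DSM for a selfadjoint operator: with `f = Ay`, `y ⊥ N(A)`, and
`u_a(t) = [i(A+ia)]⁻¹ (e^{i(A+ia)t} − I)(−if)` (the solution of
`u̇ = i(A+ia)u − if, u(0)=0`), the iterated limit `lim_{a→0⁺} lim_{t→∞} u_a(t)` equals `y`. -/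
theorem dsm_iterated_limit
    {H : Type*} [NormedAddCommGroup H] [InnerProductSpace ℂ H] [CompleteSpace H]
    (A : H →L[ℂ] H) (hA : IsSelfAdjoint A)
    (y f : H) (hf : f = A y)
    (hy : ∀ v : H, A v = 0 → (inner ℂ v y : ℂ) = 0)
    (R : ℝ → H →L[ℂ] H)
    (hR : ∀ a : ℝ, 0 < a →
      R a ∘L (A + (Complex.I * a) • 1) = 1 ∧ (A + (Complex.I * a) • 1) ∘L R a = 1)
    (u : ℝ → ℝ → H)
    (hu : ∀ a t : ℝ, u a t =
      (-Complex.I) • (R a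
        ((NormedSpace.exp ((t : ℂ) • (Complex.I • (A + (Complex.I * a) • 1))) - 1)
          ((-Complex.I) • f)))) :
    ∃ L : ℝ → H,
      (∀ a : ℝ, 0 < a → Tendsto (fun t : ℝ => u a t) atTop (𝓝 (L a))) ∧
      Tendsto L (𝓝[>] 0) (𝓝 y) := by
  refine ⟨fun a => R a f, fun a ha => ?_, ?_⟩
  · have hE := (hA.tendsto_exp_smul_I_smul_add_apply_atTop ha ((-I) • f)).sub_const ((-I) • f)
    have hlim := (((R a).continuous.tendsto _).comp hE).const_smul (-I)
    rw [show -I • R a (0 - -I • f) = R a f by simp [smul_smul]] at hlim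
    simp_rw [hu, sub_apply, one_apply_eq_self]
    exact hlim
  · have hy' : y ∈ closure (Set.range A) :=
      hA.mem_closure_range_of_mem_orthogonal_ker ((Submodule.mem_orthogonal _ _).2 hy)
    have hL : ∀ᶠ a : ℝ in 𝓝[>] 0, y - (I * a) • R a y = R a f := by
      filter_upwards [self_mem_nhdsWithin] with a (ha : 0 < a)
      rw [hf, apply_eq_sub_smul_of_comp_add_smul_one_eq_one (hR a ha).1]
    simpa using (tendsto_const_nhds.sub
      (hA.tendsto_I_mul_smul_resolvent_apply_nhdsGT_zero hR hy')).congr' hL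
end

section
/- Let a : [0,∞) → (0,∞) be continuously differentiable, decreasing to 0, with a' + a² ∈ L¹(0,∞) and ∫_0^∞ a(s) ds = ∞. Then for every real λ ≠ 0, lim_{t→∞} ∫_0^t e^{iλ(t−s)} a(s) exp(−∫_s^t a(p) dp) ds = 0. -/
/-!
Put `A(t) = ∫₀ᵗ a`. The integrand is `a(s) K_t(s)` with `K_t(s) = e^{iλ(t-s) + A(s) - A(t)}`
(`dampedKernel A λ t s`), and `∂ₛ K_t = (a - iλ) K_t`. Writing `a K_t = φ ∂ₛ K_t` with
`φ = a / (a - iλ)` and integrating by parts leaves the boundary terms `φ(t) - φ(0) K_t(0)`, which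
vanish as `t → ∞` because `a(t) → 0` and `A(t) → ∞`, and the term `iλ ∫₀ᵗ a' / (a - iλ)² K_t`,
bounded by `|λ|⁻¹ ∫₀ᵗ |a'(s)| e^{A(s) - A(t)} ds`. As `a' ≤ 0`, `|a'| ≤ a² + |a' + a²|`: the `a²`
part is an `e^A`-weighted average of `a → 0`, and the integrable part `|a' + a²|` is killed by
dominated convergence.
-/

open Filter Topology MeasureTheory Set

theorem ContinuousOn.integrableOn_Ioc_of_Ici {E : Type*} [NormedAddCommGroup E] {f : ℝ → E}
    {c T t : ℝ} (hf : ContinuousOn f (Ici c)) (hT : c ≤ T) : IntegrableOn f (Ioc T t) :=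
  ((hf.mono (Icc_subset_Ici_self.trans (Ici_subset_Ici.2 hT))).integrableOn_Icc).mono_set
    Ioc_subset_Icc_self

theorem ContinuousOn.intervalIntegrable_of_Ici {E : Type*} [NormedAddCommGroup E] {f : ℝ → E}
    {c T t : ℝ} (hf : ContinuousOn f (Ici c)) (hT : c ≤ T) (ht : c ≤ t) :
    IntervalIntegrable f volume T t :=
  (hf.mono fun _ hx => (le_min hT ht).trans hx.1).intervalIntegrable

theorem HasDerivAt.nonpos_of_antitoneOn_Ici {f : ℝ → ℝ} {f' c x : ℝ} (hf : HasDerivAt f f' x)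
    (hmono : AntitoneOn f (Ici c)) (hx : c ≤ x) : f' ≤ 0 := by
  have hacc : AccPt x (𝓟 (Ioi x)) := by
    rw [accPt_principal_iff_nhdsWithin, sdiff_singleton_eq_self (show x ∉ Ioi x from lt_irrefl x)]
    infer_instance
  exact hf.hasDerivWithinAt.nonpos_of_antitoneOn (hacc.mono (principal_mono.2
    (Ioi_subset_Ici hx))) hmono

theorem monotoneOn_Ici_of_hasDerivAt_nonneg {A a : ℝ → ℝ}
    (hA : ∀ s, 0 < s → HasDerivAt A (a s) s) (hAc : ContinuousOn A (Ici 0))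
    (ha0 : ∀ s, 0 ≤ s → 0 ≤ a s) : MonotoneOn A (Ici 0) :=
  monotoneOn_of_hasDerivWithinAt_nonneg (convex_Ici 0) hAc
    (fun s hs => (hA s (by simpa using hs)).hasDerivWithinAt)
    (fun s hs => ha0 s (by simpa using (interior_subset hs : s ∈ Ici (0 : ℝ))))

section Primitive

variable {a : ℝ → ℝ}

theorem hasDerivAt_primitive_of_continuousOn_Ici (ha : ContinuousOn a (Ici 0)) {s : ℝ}
    (hs : 0 < s) : HasDerivAt (fun t => ∫ x in (0 : ℝ)..t, a x) (a s) s :=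
  intervalIntegral.integral_hasDerivAt_right (ha.intervalIntegrable_of_Ici le_rfl hs.le)
    ((ha.mono (Ioi_subset_Ici le_rfl)).stronglyMeasurableAtFilter isOpen_Ioi s hs)
    ((ha.mono (Ioi_subset_Ici le_rfl)).continuousAt (Ioi_mem_nhds hs))

theorem continuousOn_primitive_Ici (ha : ContinuousOn a (Ici 0)) :
    ContinuousOn (fun t => ∫ x in (0 : ℝ)..t, a x) (Ici 0) := by
  intro s hs
  have hs1 : (0 : ℝ) ≤ s + 1 := by linarith [mem_Ici.1 hs]
  have hIcc : ContinuousOn (fun t => ∫ x in (0 : ℝ)..t, a x) (Icc 0 (s + 1)) := by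
    simpa [uIcc_of_le hs1] using intervalIntegral.continuousOn_primitive_interval'
      (ha.intervalIntegrable_of_Ici le_rfl hs1) left_mem_uIcc
  refine (hIcc s ⟨hs, by linarith⟩).mono_of_mem_nhdsWithin ?_
  rw [← Ici_inter_Iic]
  exact inter_mem_nhdsWithin _ (Iic_mem_nhds (by linarith))

theorem setIntegral_Ioc_eq_primitive_sub (ha : ContinuousOn a (Ici 0)) {s t : ℝ} (hs : 0 ≤ s)
    (hst : s ≤ t) :
    ∫ x in Ioc s t, a x = (∫ x in (0 : ℝ)..t, a x) - ∫ x in (0 : ℝ)..s, a x := by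
  rw [← intervalIntegral.integral_of_le hst, intervalIntegral.integral_interval_sub_left
    (ha.intervalIntegrable_of_Ici le_rfl (hs.trans hst)) (ha.intervalIntegrable_of_Ici le_rfl hs)]

theorem tendsto_primitive_atTop_of_not_integrableOn (ha : ContinuousOn a (Ici 0))
    (ha0 : ∀ s, 0 ≤ s → 0 ≤ a s) (hdiv : ¬ IntegrableOn a (Ioi 0)) :
    Tendsto (fun t => ∫ x in (0 : ℝ)..t, a x) atTop atTop := by
  have hmono : MonotoneOn (fun t => ∫ x in (0 : ℝ)..t, a x) (Ici 0) :=
    monotoneOn_Ici_of_hasDerivAt_nonneg (fun s hs => hasDerivAt_primitive_of_continuousOn_Ici ha hs)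
      (continuousOn_primitive_Ici ha) ha0
  refine tendsto_atTop_atTop.2 fun b => ?_
  by_contra! hbounded
  refine hdiv (integrableOn_Ioi_of_intervalIntegral_norm_bounded b 0
    (fun t => ha.integrableOn_Ioc_of_Ici le_rfl) tendsto_id
    (eventually_atTop.2 ⟨0, fun t ht => ?_⟩))
  obtain ⟨t', htt', hbt'⟩ := hbounded t
  have habs : ∫ x in (0 : ℝ)..t, ‖a x‖ = ∫ x in (0 : ℝ)..t, a x :=
    intervalIntegral.integral_congr fun x hx => by
      rw [uIcc_of_le ht] at hx
      exact Real.norm_of_nonneg (ha0 x hx.1)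
  rw [id, habs]
  exact (hmono ht (ht.trans htt') htt').trans hbt'.le

end Primitive

section ExpWeight

variable {a A : ℝ → ℝ}

theorem tendsto_exp_sub_of_tendsto_atTop (hA : Tendsto A atTop atTop) (c : ℝ) :
    Tendsto (fun t => Real.exp (c - A t)) atTop (𝓝 0) :=
  Real.tendsto_exp_atBot.comp (tendsto_atBot_add_const_left _ c (tendsto_neg_atTop_atBot.comp hA))

theorem tendsto_setIntegral_mul_exp_sub_of_integrableOn {k : ℝ → ℝ} (hA : MonotoneOn A (Ioi 0))
    (hAtop : Tendsto A atTop atTop) (hk : IntegrableOn k (Ioi 0)) :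
    Tendsto (fun t => ∫ s in Ioc 0 t, k s * Real.exp (A s - A t)) atTop (𝓝 0) := by
  have hind : ∀ t, ∫ s in Ioc 0 t, k s * Real.exp (A s - A t) =
      ∫ s in Ioi 0, (Ioc 0 t).indicator (fun s => k s * Real.exp (A s - A t)) s := fun t => by
    rw [setIntegral_indicator measurableSet_Ioc, inter_eq_right.2 Ioc_subset_Ioi_self]
  have hmeas : ∀ t, AEStronglyMeasurable
      ((Ioc 0 t).indicator fun s => k s * Real.exp (A s - A t)) (volume.restrict (Ioi 0)) :=
    fun t => (hk.aestronglyMeasurable.mul ((aemeasurable_restrict_of_monotoneOn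
      measurableSet_Ioi hA).sub_const _).exp.aestronglyMeasurable).indicator measurableSet_Ioc
  have hbound : ∀ t, ∀ s ∈ Ioi (0 : ℝ),
      ‖(Ioc 0 t).indicator (fun s => k s * Real.exp (A s - A t)) s‖ ≤ ‖k s‖ := by
    intro t s _
    by_cases hs : s ∈ Ioc 0 t
    · rw [indicator_of_mem hs, norm_mul, Real.norm_of_nonneg (Real.exp_pos _).le]
      exact mul_le_of_le_one_right (norm_nonneg _)
        (Real.exp_le_one_iff.2 (sub_nonpos.2 (hA hs.1 (hs.1.trans_le hs.2) hs.2)))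
    · rw [indicator_of_notMem hs, norm_zero]
      exact norm_nonneg _
  have hlim : ∀ s ∈ Ioi (0 : ℝ), Tendsto
      (fun t => (Ioc 0 t).indicator (fun s => k s * Real.exp (A s - A t)) s) atTop (𝓝 0) := by
    intro s hs
    have hdecay : Tendsto (fun t => k s * Real.exp (A s - A t)) atTop (𝓝 0) := by
      simpa using (tendsto_exp_sub_of_tendsto_atTop hAtop (A s)).const_mul (k s)
    refine hdecay.congr' (eventually_atTop.2 ⟨s, fun t hst => ?_⟩)
    exact (indicator_of_mem (show s ∈ Ioc 0 t from ⟨hs, hst⟩)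
      (fun s => k s * Real.exp (A s - A t))).symm
  simpa [hind] using tendsto_integral_filter_of_dominated_convergence (l := atTop)
    (f := fun _ => 0) _ (.of_forall hmeas)
    (.of_forall fun t => ae_restrict_of_forall_mem measurableSet_Ioi (hbound t)) hk.norm
    (ae_restrict_of_forall_mem measurableSet_Ioi hlim)

theorem setIntegral_Ioc_mul_exp_sub (hA : ∀ s, 0 < s → HasDerivAt A (a s) s)
    (hAc : ContinuousOn A (Ici 0)) (ha : ContinuousOn a (Ici 0)) {T t : ℝ} (hT : 0 ≤ T)
    (hTt : T ≤ t) :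
    ∫ s in Ioc T t, a s * Real.exp (A s - A t) = 1 - Real.exp (A T - A t) := by
  have hsub : Icc T t ⊆ Ici 0 := Icc_subset_Ici_self.trans (Ici_subset_Ici.2 hT)
  have hftc := intervalIntegral.integral_eq_sub_of_hasDeriv_right_of_le hTt
    (f := fun s => Real.exp (A s - A t))
    ((hAc.mono hsub).sub continuousOn_const).rexp (fun s hs =>
      (((hA s (hT.trans_lt hs.1)).sub_const (A t)).exp.congr_deriv (mul_comm _ _)).hasDerivWithinAt)
    ((ha.mul (hAc.sub continuousOn_const).rexp).intervalIntegrable_of_Ici hT (hT.trans hTt))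
  rwa [sub_self, Real.exp_zero, intervalIntegral.integral_of_le hTt] at hftc

theorem norm_setIntegral_Ioc_mul_mul_exp_sub_le (hA : ∀ s, 0 < s → HasDerivAt A (a s) s)
    (hAc : ContinuousOn A (Ici 0)) (ha : ContinuousOn a (Ici 0)) (ha0 : ∀ s, 0 ≤ s → 0 ≤ a s)
    {u : ℝ → ℝ} {ε T t : ℝ} (hT : 0 ≤ T) (hTt : T ≤ t)
    (huε : ∀ s, T ≤ s → |u s| ≤ ε) :
    ‖∫ s in Ioc T t, a s * u s * Real.exp (A s - A t)‖ ≤ ε := by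
  have hε : 0 ≤ ε := (abs_nonneg _).trans (huε T le_rfl)
  have hpt : ∀ s ∈ Ioc T t,
      ‖a s * u s * Real.exp (A s - A t)‖ ≤ ε * (a s * Real.exp (A s - A t)) := fun s hs => by
    have ha_s : 0 ≤ a s * Real.exp (A s - A t) :=
      mul_nonneg (ha0 s (hT.trans hs.1.le)) (Real.exp_pos _).le
    calc ‖a s * u s * Real.exp (A s - A t)‖ = |u s| * (a s * Real.exp (A s - A t)) := by
          rw [Real.norm_eq_abs, mul_right_comm, abs_mul, abs_of_nonneg ha_s, mul_comm]
      _ ≤ ε * (a s * Real.exp (A s - A t)) := mul_le_mul_of_nonneg_right (huε s hs.1.le) ha_s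
  calc ‖∫ s in Ioc T t, a s * u s * Real.exp (A s - A t)‖
      ≤ ∫ s in Ioc T t, ε * (a s * Real.exp (A s - A t)) :=
        norm_integral_le_of_norm_le
          (((ha.mul (hAc.sub continuousOn_const).rexp).integrableOn_Ioc_of_Ici hT).const_mul ε)
          (ae_restrict_of_forall_mem measurableSet_Ioc hpt)
    _ = ε * (1 - Real.exp (A T - A t)) := by
        rw [integral_const_mul, setIntegral_Ioc_mul_exp_sub hA hAc ha hT hTt]
    _ ≤ ε := mul_le_of_le_one_right hε (sub_le_self _ (Real.exp_pos _).le)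

theorem tendsto_setIntegral_mul_mul_exp_sub (hA : ∀ s, 0 < s → HasDerivAt A (a s) s)
    (hAc : ContinuousOn A (Ici 0)) (ha : ContinuousOn a (Ici 0)) (ha0 : ∀ s, 0 ≤ s → 0 ≤ a s)
    (hAtop : Tendsto A atTop atTop) {u : ℝ → ℝ} (hu : ContinuousOn u (Ici 0))
    (hu0 : Tendsto u atTop (𝓝 0)) :
    Tendsto (fun t => ∫ s in Ioc 0 t, a s * u s * Real.exp (A s - A t)) atTop (𝓝 0) := by
  refine Metric.tendsto_nhds.2 fun ε hε => ?_
  obtain ⟨T₀, hT₀⟩ := eventually_atTop.1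
    ((by simpa using hu0.abs : Tendsto (fun s => |u s|) atTop (𝓝 0)).eventually
      (ge_mem_nhds (half_pos hε)))
  set T := max T₀ 0
  have hT : 0 ≤ T := le_max_right _ _
  set K := ∫ s in Ioc 0 T, a s * u s * Real.exp (A s)
  have hhead : ∀ t, ∫ s in Ioc 0 T, a s * u s * Real.exp (A s - A t) = K / Real.exp (A t) :=
    fun t => by simp_rw [Real.exp_sub, mul_div_assoc', integral_div, K]
  have hK : Tendsto (fun t => |K| / Real.exp (A t)) atTop (𝓝 0) :=
    tendsto_const_nhds.div_atTop (Real.tendsto_exp_atTop.comp hAtop)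
  filter_upwards [hK.eventually (gt_mem_nhds (half_pos hε)), eventually_ge_atTop T]
    with t hKt hTt
  have hint : ∀ {T' t'}, 0 ≤ T' →
      IntegrableOn (fun s => a s * u s * Real.exp (A s - A t)) (Ioc T' t') :=
    fun hT' => ((ha.mul hu).mul (hAc.sub continuousOn_const).rexp).integrableOn_Ioc_of_Ici hT'
  rw [dist_zero_right, ← Ioc_union_Ioc_eq_Ioc hT hTt, setIntegral_union
    (Ioc_disjoint_Ioc_of_le le_rfl) measurableSet_Ioc (hint le_rfl) (hint hT), hhead]
  calc ‖K / Real.exp (A t) + ∫ s in Ioc T t, a s * u s * Real.exp (A s - A t)‖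
      ≤ |K| / Real.exp (A t) + ε / 2 := by
        refine (norm_add_le _ _).trans (add_le_add (by
          rw [Real.norm_eq_abs, abs_div, abs_of_pos (Real.exp_pos _)]) ?_)
        exact norm_setIntegral_Ioc_mul_mul_exp_sub_le hA hAc ha ha0 hT hTt
          fun s hs => hT₀ s ((le_max_left _ _).trans hs)
    _ < ε := by linarith

end ExpWeight

section DampedKernel

open Complex (I)

noncomputable def dampedKernel (A : ℝ → ℝ) (lam t s : ℝ) : ℂ :=
  Complex.exp (I * lam * (t - s) + (A s - A t))

variable {a a' A : ℝ → ℝ} {lam t : ℝ}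

theorem norm_dampedKernel (s : ℝ) : ‖dampedKernel A lam t s‖ = Real.exp (A s - A t) := by
  simp [dampedKernel, Complex.norm_exp]

theorem dampedKernel_self : dampedKernel A lam t t = 1 := by
  simp [dampedKernel]

theorem hasDerivAt_dampedKernel {s : ℝ} (hA : HasDerivAt A (a s) s) :
    HasDerivAt (dampedKernel A lam t) ((a s - I * lam) * dampedKernel A lam t s) s := by
  have hphase : HasDerivAt (fun s : ℝ => I * lam * (t - s) + (A s - A t)) (-(I * lam) + a s) s := by
    simpa using (((hasDerivAt_id s).ofReal_comp.const_sub (t : ℂ)).const_mul (I * lam)).fun_add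
      (hA.ofReal_comp.sub_const (A t : ℂ))
  rw [neg_add_eq_sub] at hphase
  exact hphase.cexp.congr_deriv (mul_comm _ _)

theorem continuousOn_dampedKernel (hAc : ContinuousOn A (Ici 0)) :
    ContinuousOn (dampedKernel A lam t) (Ici 0) := by
  refine ContinuousOn.cexp (ContinuousOn.add (by fun_prop) ?_)
  exact (Complex.continuous_ofReal.comp_continuousOn hAc).sub continuousOn_const

theorem abs_le_norm_ofReal_sub_I_mul (x lam : ℝ) : |lam| ≤ ‖(x : ℂ) - I * lam‖ := by
  simpa using Complex.abs_im_le_norm ((x : ℂ) - I * lam)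

theorem ofReal_sub_I_mul_ne_zero (x : ℝ) (hlam : lam ≠ 0) : (x : ℂ) - I * lam ≠ 0 :=
  norm_pos_iff.1 ((abs_pos.2 hlam).trans_le (abs_le_norm_ofReal_sub_I_mul x lam))

theorem setIntegral_mul_dampedKernel_eq (hlam : lam ≠ 0) (ht : 0 ≤ t)
    (ha : ∀ s, 0 < s → HasDerivAt a (a' s) s) (hac : ContinuousOn a (Ici 0))
    (ha'c : ContinuousOn a' (Ici 0)) (hA : ∀ s, 0 < s → HasDerivAt A (a s) s)
    (hAc : ContinuousOn A (Ici 0)) :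
    ∫ s in Ioc 0 t, a s * dampedKernel A lam t s =
      a t / (a t - I * lam) - a 0 / (a 0 - I * lam) * dampedKernel A lam t 0 +
        I * lam * ∫ s in Ioc 0 t, a' s / (a s - I * lam) ^ 2 * dampedKernel A lam t s := by
  have hne : ∀ s, (a s : ℂ) - I * lam ≠ 0 := fun s => ofReal_sub_I_mul_ne_zero (a s) hlam
  have hacC : ContinuousOn (fun s => (a s : ℂ)) (Ici 0) :=
    Complex.continuous_ofReal.comp_continuousOn hac
  have hK := continuousOn_dampedKernel (lam := lam) (t := t) hAc
  have hφ : ∀ s, 0 < s → HasDerivAt (fun s => (a s : ℂ) / (a s - I * lam))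
      (-(I * lam) * (a' s / (a s - I * lam) ^ 2)) s := fun s hs =>
    ((ha s hs).ofReal_comp.fun_div ((ha s hs).ofReal_comp.sub_const (I * lam)) (hne s)).congr_deriv
      (by ring)
  have hpos : ∀ s ∈ Ioo (min 0 t) (max 0 t), 0 < s := fun s hs => (le_min le_rfl ht).trans_lt hs.1
  have hsub : uIcc 0 t ⊆ Ici 0 := fun s hs => (le_min le_rfl ht).trans hs.1
  have hibp := intervalIntegral.integral_mul_deriv_eq_deriv_mul_of_hasDerivAt
    (u := fun s => (a s : ℂ) / (a s - I * lam)) (v := dampedKernel A lam t)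
    (u' := fun s => -(I * lam) * (a' s / (a s - I * lam) ^ 2))
    (v' := fun s => (a s - I * lam) * dampedKernel A lam t s)
    ((hacC.div (hacC.sub continuousOn_const) fun s _ => hne s).mono hsub) (hK.mono hsub)
    (fun s hs => hφ s (hpos s hs)) (fun s hs => hasDerivAt_dampedKernel (hA s (hpos s hs)))
    ((continuousOn_const.mul ((Complex.continuous_ofReal.comp_continuousOn ha'c).div
      ((hacC.sub continuousOn_const).pow 2) fun s _ => pow_ne_zero 2 (hne s)))
      |>.intervalIntegrable_of_Ici le_rfl ht)
    (((hacC.sub continuousOn_const).mul hK).intervalIntegrable_of_Ici le_rfl ht)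
  have hlhs : ∀ s, (a s : ℂ) / (a s - I * lam) * ((a s - I * lam) * dampedKernel A lam t s) =
      a s * dampedKernel A lam t s := fun s => by
    rw [← mul_assoc, div_mul_cancel₀ _ (hne s)]
  simp_rw [hlhs, mul_assoc, intervalIntegral.integral_const_mul, dampedKernel_self] at hibp
  rw [← intervalIntegral.integral_of_le ht, ← intervalIntegral.integral_of_le ht, hibp]
  ring

theorem norm_setIntegral_mul_dampedKernel_le (hlam : lam ≠ 0) (ht : 0 ≤ t)
    (ha : ∀ s, 0 < s → HasDerivAt a (a' s) s) (hac : ContinuousOn a (Ici 0))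
    (ha'c : ContinuousOn a' (Ici 0)) (hA : ∀ s, 0 < s → HasDerivAt A (a s) s)
    (hAc : ContinuousOn A (Ici 0)) :
    ‖∫ s in Ioc 0 t, a s * dampedKernel A lam t s‖ ≤
      (|a t| + |a 0| * Real.exp (A 0 - A t) +
        ∫ s in Ioc 0 t, |a' s| * Real.exp (A s - A t)) / |lam| := by
  have hlam' : 0 < |lam| := abs_pos.2 hlam
  have hφ : ∀ x : ℝ, ‖(x : ℂ) / (x - I * lam)‖ ≤ |x| / |lam| := fun x => by
    rw [norm_div, Complex.norm_real, Real.norm_eq_abs]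
    exact div_le_div_of_nonneg_left (abs_nonneg _) hlam' (abs_le_norm_ofReal_sub_I_mul x lam)
  have hψ : ∀ s, ‖(a' s : ℂ) / (a s - I * lam) ^ 2 * dampedKernel A lam t s‖ ≤
      |a' s| * Real.exp (A s - A t) / |lam| ^ 2 := fun s => by
    rw [norm_mul, norm_div, norm_pow, Complex.norm_real, Real.norm_eq_abs, norm_dampedKernel,
      div_mul_eq_mul_div]
    exact div_le_div_of_nonneg_left (by positivity) (by positivity)
      (pow_le_pow_left₀ hlam'.le (abs_le_norm_ofReal_sub_I_mul _ lam) 2)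
  have hint : ‖∫ s in Ioc 0 t, (a' s : ℂ) / (a s - I * lam) ^ 2 * dampedKernel A lam t s‖ ≤
      (∫ s in Ioc 0 t, |a' s| * Real.exp (A s - A t)) / |lam| ^ 2 := by
    rw [← integral_div]
    exact norm_integral_le_of_norm_le
      (((ha'c.abs.mul (hAc.sub continuousOn_const).rexp).integrableOn_Ioc_of_Ici
        le_rfl).div_const _)
      (Eventually.of_forall hψ)
  rw [setIntegral_mul_dampedKernel_eq hlam ht ha hac ha'c hA hAc]
  calc _ ≤ ‖(a t : ℂ) / (a t - I * lam)‖ + ‖(a 0 : ℂ) / (a 0 - I * lam)‖ *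
        ‖dampedKernel A lam t 0‖ + |lam| *
          ‖∫ s in Ioc 0 t, (a' s : ℂ) / (a s - I * lam) ^ 2 * dampedKernel A lam t s‖ := by
        refine (norm_add_le _ _).trans (add_le_add ((norm_sub_le _ _).trans ?_) ?_)
        · rw [norm_mul]
        · rw [norm_mul, norm_mul, Complex.norm_I, one_mul, Complex.norm_real, Real.norm_eq_abs]
    _ ≤ |a t| / |lam| + |a 0| / |lam| * Real.exp (A 0 - A t) +
          |lam| * ((∫ s in Ioc 0 t, |a' s| * Real.exp (A s - A t)) / |lam| ^ 2) := by
        rw [norm_dampedKernel]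
        gcongr
        exacts [hφ _, hφ _]
    _ = _ := by
        field_simp

end DampedKernel

theorem tendsto_setIntegral_abs_deriv_mul_exp_sub {a a' A : ℝ → ℝ}
    (ha : ∀ s, 0 < s → HasDerivAt a (a' s) s) (hac : ContinuousOn a (Ici 0))
    (ha'c : ContinuousOn a' (Ici 0)) (ha0 : ∀ s, 0 ≤ s → 0 ≤ a s)
    (hmono : AntitoneOn a (Ici 0)) (hlim : Tendsto a atTop (𝓝 0))
    (hL1 : IntegrableOn (fun s => a' s + a s ^ 2) (Ioi 0))
    (hA : ∀ s, 0 < s → HasDerivAt A (a s) s) (hAc : ContinuousOn A (Ici 0))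
    (hAtop : Tendsto A atTop atTop) :
    Tendsto (fun t => ∫ s in Ioc 0 t, |a' s| * Real.exp (A s - A t)) atTop (𝓝 0) := by
  have hexp : ∀ t, ContinuousOn (fun s => Real.exp (A s - A t)) (Ici 0) :=
    fun t => (hAc.sub continuousOn_const).rexp
  have hpt : ∀ t, ∀ s ∈ Ioc (0 : ℝ) t, |a' s| * Real.exp (A s - A t) ≤
      a s * a s * Real.exp (A s - A t) + |a' s + a s ^ 2| * Real.exp (A s - A t) := by
    intro t s hs
    rw [← add_mul]
    refine mul_le_mul_of_nonneg_right ?_ (Real.exp_pos _).le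
    rw [abs_of_nonpos ((ha s hs.1).nonpos_of_antitoneOn_Ici hmono hs.1.le)]
    linarith [neg_abs_le (a' s + a s ^ 2)]
  have hbound : ∀ t, ∫ s in Ioc 0 t, |a' s| * Real.exp (A s - A t) ≤
      (∫ s in Ioc 0 t, a s * a s * Real.exp (A s - A t)) +
        ∫ s in Ioc 0 t, |a' s + a s ^ 2| * Real.exp (A s - A t) := fun t => by
    have hsq : IntegrableOn (fun s => a s * a s * Real.exp (A s - A t)) (Ioc 0 t) :=
      ((hac.mul hac).mul (hexp t)).integrableOn_Ioc_of_Ici le_rfl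
    have hg : IntegrableOn (fun s => |a' s + a s ^ 2| * Real.exp (A s - A t)) (Ioc 0 t) :=
      (((ha'c.add (hac.pow 2)).abs).mul (hexp t)).integrableOn_Ioc_of_Ici le_rfl
    rw [← integral_add hsq hg]
    exact setIntegral_mono_on ((ha'c.abs.mul (hexp t)).integrableOn_Ioc_of_Ici le_rfl)
      (hsq.add hg) measurableSet_Ioc (hpt t)
  refine squeeze_zero (fun t => setIntegral_nonneg measurableSet_Ioc fun s _ => by positivity)
    hbound ?_
  simpa using (tendsto_setIntegral_mul_mul_exp_sub hA hAc hac ha0 hAtop hac hlim).add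
    (tendsto_setIntegral_mul_exp_sub_of_integrableOn
      ((monotoneOn_Ici_of_hasDerivAt_nonneg hA hAc ha0).mono Ioi_subset_Ici_self) hAtop hL1.abs)

/-- For `a` positive `C¹`, decreasing to `0`, with `a' + a² ∈ L¹(0,∞)` and `∫_0^∞ a = ∞`,
and any real `λ ≠ 0`, the oscillatory integral
`∫_0^t e^{iλ(t−s)} a(s) exp(−∫_s^t a(p)dp) ds` tends to `0` as `t → ∞`. -/
theorem oscillatory_integral_tendsto_zero
    (a a' : ℝ → ℝ)
    (hderiv : ∀ t : ℝ, 0 ≤ t → HasDerivAt a (a' t) t)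
    (hcont : ContinuousOn a' (Set.Ici 0))
    (hpos : ∀ t : ℝ, 0 ≤ t → 0 < a t)
    (hmono : AntitoneOn a (Set.Ici 0))
    (hlim : Tendsto a atTop (𝓝 0))
    (hL1 : IntegrableOn (fun t => a' t + (a t) ^ 2) (Set.Ioi 0))
    (hdiv : ¬ IntegrableOn a (Set.Ioi 0))
    (lam : ℝ) (hlam : lam ≠ 0) :
    Tendsto (fun t : ℝ =>
        ∫ s in Set.Ioc (0 : ℝ) t,
          Complex.exp (Complex.I * lam * ((t : ℂ) - (s : ℂ))) * (a s : ℂ) *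
            (Real.exp (-∫ p in Set.Ioc s t, a p) : ℂ))
      atTop (𝓝 0) := by
  set A : ℝ → ℝ := fun t => ∫ x in (0 : ℝ)..t, a x
  have hac : ContinuousOn a (Ici 0) := fun t ht => (hderiv t ht).continuousAt.continuousWithinAt
  have ha : ∀ s, 0 < s → HasDerivAt a (a' s) s := fun s hs => hderiv s hs.le
  have ha0 : ∀ s, 0 ≤ s → 0 ≤ a s := fun s hs => (hpos s hs).le
  have hA : ∀ s, 0 < s → HasDerivAt A (a s) s :=
    fun s hs => hasDerivAt_primitive_of_continuousOn_Ici hac hs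
  have hAc : ContinuousOn A (Ici 0) := continuousOn_primitive_Ici hac
  have hAtop : Tendsto A atTop atTop := tendsto_primitive_atTop_of_not_integrableOn hac ha0 hdiv
  have hintegrand : ∀ t, ∀ s ∈ Ioc (0 : ℝ) t,
      Complex.exp (Complex.I * lam * ((t : ℂ) - (s : ℂ))) * (a s : ℂ) *
        (Real.exp (-∫ p in Ioc s t, a p) : ℂ) = a s * dampedKernel A lam t s := by
    intro t s hs
    rw [setIntegral_Ioc_eq_primitive_sub hac hs.1.le hs.2, Complex.ofReal_exp, dampedKernel,
      Complex.exp_add, neg_sub]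
    push_cast [A]
    ring
  have hbound : Tendsto (fun t => (|a t| + |a 0| * Real.exp (A 0 - A t) +
      ∫ s in Ioc 0 t, |a' s| * Real.exp (A s - A t)) / |lam|) atTop (𝓝 0) := by
    simpa using ((hlim.abs.add ((tendsto_exp_sub_of_tendsto_atTop hAtop (A 0)).const_mul |a 0|)).add
      (tendsto_setIntegral_abs_deriv_mul_exp_sub ha hac hcont ha0 hmono hlim hL1 hA hAc
        hAtop)).div_const |lam|
  refine squeeze_zero_norm' (eventually_atTop.2 ⟨0, fun t ht => ?_⟩) hbound
  rw [setIntegral_congr_fun measurableSet_Ioc (hintegrand t)]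
  exact norm_setIntegral_mul_dampedKernel_le hlam ht ha hac hcont hA hAc
end

section
/- Let A be a bounded linear operator on a Hilbert space H, T = A*A, f = Ay with y ⊥ N(A), and let a : [0,∞) → (0,∞) be continuous, monotonically decaying to 0 with ∫_0^∞ a = ∞. Then the solution u(t) = ∫_0^t e^{−(t−s)} (T + a(s)I)^{-1} A* f ds of u̇ = −u + (T+a(t)I)^{-1}A*f, u(0) = 0, satisfies lim_{t→∞} ‖u(t) − y‖ = 0. -/
/-! With `w s = (T + a s)⁻¹ A* f` we have `(T + a s) (w s) = T y`: `w s` is the Tikhonov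
regularization of `T x = T y` with parameter `a s`. Positivity of `T` gives
`c ‖x‖ ≤ ‖(T + c) x‖`, so regularized solutions depend continuously on the parameter, and they
converge to `y` as `c → 0` because `y ⊥ N(A)` lies in the closure of the range of `T`:
approximating `y` by `T z` bounds the error by `‖y - T z‖ + 2 c ‖z‖`. Finally `u t` is an
exponential average of `w` over `[0, t]`; after the substitution `r = t - s`, dominated
convergence shows that it has the same limit `y` as `w`. -/

open ContinuousLinearMap Filter Topology MeasureTheory Set

namespace ContinuousLinearMap

variable {𝕜 E F : Type*} [RCLike 𝕜] [NormedAddCommGroup E] [InnerProductSpace 𝕜 E]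
  [NormedAddCommGroup F] [InnerProductSpace 𝕜 F]

theorem orthogonal_ker_eq_closure_range_adjoint_comp_self [CompleteSpace E] [CompleteSpace F]
    (A : E →L[𝕜] F) :
    (LinearMap.ker (A : E →ₗ[𝕜] F))ᗮ =
      (LinearMap.range (adjoint A ∘L A : E →ₗ[𝕜] E)).topologicalClosure := by
  rw [← ker_adjoint_comp_self, orthogonal_ker, adjoint_comp, adjoint_adjoint]

namespace IsPositive

variable {T : E →L[𝕜] E}

theorem mul_norm_le_norm_add_smul (hT : T.IsPositive) (c : ℝ) (x : E) :
    c * ‖x‖ ≤ ‖T x + (c : 𝕜) • x‖ := by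
  have key : c * ‖x‖ * ‖x‖ ≤ ‖T x + (c : 𝕜) • x‖ * ‖x‖ := calc
    c * ‖x‖ * ‖x‖ ≤ RCLike.re (inner 𝕜 x (T x)) + c * ‖x‖ ^ 2 := by
      nlinarith [hT.re_inner_nonneg_right x]
    _ = RCLike.re (inner 𝕜 x (T x + (c : 𝕜) • x)) := by
      rw [inner_add_right, inner_smul_right, inner_self_eq_norm_sq_to_K, map_add]
      norm_cast
    _ ≤ ‖T x + (c : 𝕜) • x‖ * ‖x‖ := (re_inner_le_norm _ _).trans_eq (mul_comm _ _)
  rcases (norm_nonneg x).eq_or_lt with hx | hx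
  · rw [← hx, mul_zero]
    exact norm_nonneg _
  · exact le_of_mul_le_mul_right key hx

theorem norm_sub_le_of_add_smul_eq (hT : T.IsPositive) {c d : ℝ} (hc : 0 < c) (hd : 0 < d)
    {x x' v : E} (hx : T x + (c : 𝕜) • x = v) (hx' : T x' + (d : 𝕜) • x' = v) :
    ‖x - x'‖ ≤ |c - d| * ‖v‖ / (c * d) := by
  have hx'v : d * ‖x'‖ ≤ ‖v‖ := hx' ▸ hT.mul_norm_le_norm_add_smul d x'
  have hdiff : T (x - x') + (c : 𝕜) • (x - x') = ((d - c : ℝ) : 𝕜) • x' := by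
    rw [map_sub]
    push_cast
    linear_combination (norm := module) hx - hx'
  have := hT.mul_norm_le_norm_add_smul c (x - x')
  rw [hdiff, norm_smul, RCLike.norm_ofReal, abs_sub_comm] at this
  rw [le_div_iff₀ (mul_pos hc hd)]
  nlinarith [abs_nonneg (c - d)]

theorem continuousOn_of_add_smul_eq {X : Type*} [TopologicalSpace X] (hT : T.IsPositive)
    {S : Set X} {c : X → ℝ} {x : X → E} {v : E} (hc : ContinuousOn c S)
    (hpos : ∀ s ∈ S, 0 < c s) (hx : ∀ s ∈ S, T (x s) + (c s : 𝕜) • x s = v) :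
    ContinuousOn x S := by
  intro s₀ hs₀
  rw [ContinuousWithinAt, tendsto_iff_norm_sub_tendsto_zero]
  have hbound : Tendsto (fun s => |c s - c s₀| * ‖v‖ / (c s * c s₀)) (𝓝[S] s₀) (𝓝 0) := by
    have hcs₀ := hc s₀ hs₀
    have h := ((hcs₀.tendsto.sub_const (c s₀)).abs.mul_const ‖v‖).div
      (hcs₀.tendsto.mul_const (c s₀)) (mul_pos (hpos s₀ hs₀) (hpos s₀ hs₀)).ne'
    rwa [sub_self, abs_zero, zero_mul, zero_div] at h
  refine squeeze_zero' (Eventually.of_forall fun _ => norm_nonneg _) ?_ hbound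
  filter_upwards [self_mem_nhdsWithin] with s hs
  exact hT.norm_sub_le_of_add_smul_eq (hpos s hs) (hpos s₀ hs₀) (hx s hs) (hx s₀ hs₀)

theorem norm_sub_le_of_add_smul_eq_apply (hT : T.IsPositive) {c : ℝ} (hc : 0 < c) {x y : E}
    (hx : T x + (c : 𝕜) • x = T y) (z : E) :
    ‖x - y‖ ≤ ‖y - T z‖ + 2 * c * ‖z‖ := by
  set e := x - y + (c : 𝕜) • z
  have he : T e + (c : 𝕜) • e = -(c : 𝕜) • (y - T z) + ((c * c : ℝ) : 𝕜) • z := by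
    simp only [e, map_add, map_sub, map_smul]
    push_cast
    linear_combination (norm := module) hx
  have hce : c * ‖e‖ ≤ c * (‖y - T z‖ + c * ‖z‖) := calc
    c * ‖e‖ ≤ ‖-(c : 𝕜) • (y - T z) + ((c * c : ℝ) : 𝕜) • z‖ :=
      he ▸ hT.mul_norm_le_norm_add_smul c e
    _ ≤ c * ‖y - T z‖ + c * c * ‖z‖ := by
      refine (norm_add_le _ _).trans_eq ?_
      rw [norm_smul, norm_smul, norm_neg, RCLike.norm_ofReal, RCLike.norm_ofReal,
        abs_of_pos hc, abs_of_pos (mul_pos hc hc)]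
    _ = c * (‖y - T z‖ + c * ‖z‖) := by ring
  have hcz : ‖(c : 𝕜) • z‖ = c * ‖z‖ := by rw [norm_smul, RCLike.norm_ofReal, abs_of_pos hc]
  calc ‖x - y‖ = ‖e - (c : 𝕜) • z‖ := by simp only [e, add_sub_cancel_right]
    _ ≤ ‖e‖ + c * ‖z‖ := (norm_sub_le _ _).trans_eq (by rw [hcz])
    _ ≤ ‖y - T z‖ + 2 * c * ‖z‖ := by nlinarith [le_of_mul_le_mul_left hce hc]

theorem tendsto_of_add_smul_eq_apply {ι : Type*} {l : Filter ι} (hT : T.IsPositive) {y : E}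
    (hy : y ∈ closure (range T)) {c : ι → ℝ} {x : ι → E} (hc : Tendsto c l (𝓝 0))
    (hpos : ∀ᶠ i in l, 0 < c i) (hx : ∀ᶠ i in l, T (x i) + (c i : 𝕜) • x i = T y) :
    Tendsto x l (𝓝 y) := by
  rw [Metric.tendsto_nhds]
  intro ε hε
  obtain ⟨z, hz⟩ := Metric.mem_closure_range_iff.1 hy (ε / 2) (half_pos hε)
  have hcz : ∀ᶠ i in l, 2 * c i * ‖z‖ < ε / 2 := by
    have : Tendsto (fun i => 2 * c i * ‖z‖) l (𝓝 0) := by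
      simpa using (hc.const_mul 2).mul_const ‖z‖
    exact this.eventually (eventually_lt_nhds (half_pos hε))
  filter_upwards [hpos, hx, hcz] with i hi hxi hczi
  rw [dist_eq_norm] at hz ⊢
  linarith [hT.norm_sub_le_of_add_smul_eq_apply hi hxi z]

end IsPositive

end ContinuousLinearMap

section ExponentialAverage

variable {E : Type*} [NormedAddCommGroup E]

theorem ContinuousOn.exists_forall_norm_le_of_tendsto_atTop {w : ℝ → E} {y : E} {a : ℝ}
    (hw : ContinuousOn w (Ici a)) (hlim : Tendsto w atTop (𝓝 y)) :
    ∃ C, ∀ s ∈ Ici a, ‖w s‖ ≤ C := by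
  obtain ⟨N, hN⟩ := eventually_atTop.1
    (hlim.norm.eventually (eventually_le_nhds (lt_add_one ‖y‖)))
  obtain ⟨C, hC⟩ := isCompact_Icc.exists_bound_of_continuousOn (hw.mono fun s hs => hs.1)
  refine ⟨max C (‖y‖ + 1), fun s hs => ?_⟩
  rcases le_total s N with hsN | hNs
  · exact (hC s ⟨hs, hsN⟩).trans (le_max_left _ _)
  · exact (hN s hNs).trans (le_max_right _ _)

variable [NormedSpace ℝ E]

theorem setIntegral_Ioc_exp_neg_sub_smul_eq (w : ℝ → E) {t : ℝ} (ht : 0 ≤ t) :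
    ∫ s in Ioc 0 t, Real.exp (-(t - s)) • w s =
      ∫ r in Ioi 0, (Iic t).indicator (fun r => Real.exp (-r) • w (t - r)) r := by
  rw [setIntegral_indicator measurableSet_Iic, Ioi_inter_Iic, ← intervalIntegral.integral_of_le ht,
    ← intervalIntegral.integral_of_le ht]
  simpa using (intervalIntegral.integral_comp_sub_left
    (fun s => Real.exp (-(t - s)) • w s) t (a := 0) (b := t)).symm

theorem tendsto_setIntegral_Ioc_exp_neg_sub_smul [CompleteSpace E] {w : ℝ → E} {y : E}
    (hw : ContinuousOn w (Ici 0)) (hlim : Tendsto w atTop (𝓝 y)) :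
    Tendsto (fun t => ∫ s in Ioc 0 t, Real.exp (-(t - s)) • w s) atTop (𝓝 y) := by
  obtain ⟨C, hC⟩ := hw.exists_forall_norm_le_of_tendsto_atTop hlim
  have hy : ∫ r in Ioi (0 : ℝ), Real.exp (-r) • y = y := by
    rw [integral_smul_const, integral_exp_neg_Ioi_zero, one_smul]
  rw [← hy]
  refine (tendsto_integral_filter_of_dominated_convergence (fun r => Real.exp (-r) * C)
    ?meas ?bound ((integrableOn_exp_neg_Ioi 0).mul_const C) ?lim).congr'
    ((eventually_ge_atTop 0).mono fun t ht => (setIntegral_Ioc_exp_neg_sub_smul_eq w ht).symm)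
  case meas =>
    refine Eventually.of_forall fun t => (aestronglyMeasurable_indicator_iff measurableSet_Iic).2 ?_
    refine ContinuousOn.aestronglyMeasurable ?_ measurableSet_Iic
    exact (Real.continuous_exp.comp continuous_neg).continuousOn.smul
      (hw.comp (continuousOn_const.sub continuousOn_id) fun r hr => sub_nonneg.2 (mem_Iic.1 hr))
  case bound =>
    refine Eventually.of_forall fun t => Eventually.of_forall fun r => ?_
    by_cases hr : r ∈ Iic t
    · rw [indicator_of_mem hr, norm_smul, Real.norm_of_nonneg (Real.exp_pos _).le]
      exact mul_le_mul_of_nonneg_left (hC _ (sub_nonneg.2 (mem_Iic.1 hr))) (Real.exp_pos _).le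
    · rw [indicator_of_notMem hr, norm_zero]
      exact mul_nonneg (Real.exp_pos _).le ((norm_nonneg _).trans (hC 0 self_mem_Ici))
  case lim =>
    refine Eventually.of_forall fun r => ?_
    refine Tendsto.congr' ((eventually_ge_atTop r).mono fun t ht => (indicator_of_mem ht _).symm) ?_
    exact (hlim.comp (tendsto_atTop_add_const_right _ (-r) tendsto_id)).const_smul _

end ExponentialAverage

theorem dsm_third_version_convergence_general
    {H : Type*} [NormedAddCommGroup H] [InnerProductSpace ℂ H] [CompleteSpace H]
    (A : H →L[ℂ] H) (T : H →L[ℂ] H) (hT : T = (adjoint A) ∘L A)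
    (y f : H) (hf : f = A y)
    (hy : ∀ v : H, A v = 0 → (inner ℂ v y : ℂ) = 0)
    (a : ℝ → ℝ)
    (hpos : ∀ t : ℝ, 0 ≤ t → 0 < a t)
    (hcont : ContinuousOn a (Set.Ici 0))
    (hlim : Tendsto a atTop (𝓝 0))
    (R : ℝ → H →L[ℂ] H)
    (hR : ∀ s : ℝ, 0 ≤ s →
      R s ∘L (T + ((a s : ℂ)) • 1) = 1 ∧ (T + ((a s : ℂ)) • 1) ∘L R s = 1)
    (u : ℝ → H)
    (hu : ∀ t : ℝ, u t =
      ∫ s in Set.Ioc (0 : ℝ) t, Real.exp (-(t - s)) • (R s ((adjoint A) f))) :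
    Tendsto (fun t : ℝ => ‖u t - y‖) atTop (𝓝 0) := by
  have hTpos : T.IsPositive := hT ▸ isPositive_adjoint_comp_self A
  have hyT : y ∈ closure (range T) := by
    have hyker : y ∈ (LinearMap.ker (A : H →ₗ[ℂ] H))ᗮ :=
      (Submodule.mem_orthogonal _ _).2 hy
    rwa [orthogonal_ker_eq_closure_range_adjoint_comp_self, ← hT, ← SetLike.mem_coe,
      Submodule.topologicalClosure_coe, LinearMap.coe_range] at hyker
  set w : ℝ → H := fun s => R s (adjoint A f)
  have hw : ∀ s ∈ Ici (0 : ℝ), T (w s) + (a s : ℂ) • w s = T y := fun s hs => by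
    simpa [w, hf, hT] using congr($((hR s hs).2) (adjoint A f))
  have hwy : Tendsto w atTop (𝓝 y) :=
    hTpos.tendsto_of_add_smul_eq_apply hyT hlim (eventually_ge_atTop 0 |>.mono hpos)
      (eventually_ge_atTop 0 |>.mono hw)
  rw [← tendsto_iff_norm_sub_tendsto_zero, funext hu]
  exact tendsto_setIntegral_Ioc_exp_neg_sub_smul
    (hTpos.continuousOn_of_add_smul_eq hcont hpos hw) hwy

/-- Third DSM version: with `T = A*A`, `f = Ay`, `y ⊥ N(A)`, and `a(t) > 0` continuous,
nonincreasing, tending to `0` with divergent integral, the solution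
`u(t) = ∫_0^t e^{−(t−s)} (T + a(s)I)⁻¹ A* f ds` of `u̇ = −u + (T+a(t)I)⁻¹A*f, u(0)=0`
converges to `y` in norm. -/
theorem dsm_third_version_convergence
    {H : Type*} [NormedAddCommGroup H] [InnerProductSpace ℂ H] [CompleteSpace H]
    (A : H →L[ℂ] H) (T : H →L[ℂ] H) (hT : T = (adjoint A) ∘L A)
    (y f : H) (hf : f = A y)
    (hy : ∀ v : H, A v = 0 → (inner ℂ v y : ℂ) = 0)
    (a : ℝ → ℝ)
    (hpos : ∀ t : ℝ, 0 ≤ t → 0 < a t)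
    (hcont : ContinuousOn a (Set.Ici 0))
    (hmono : AntitoneOn a (Set.Ici 0))
    (hlim : Tendsto a atTop (𝓝 0))
    (hdiv : ¬ MeasureTheory.IntegrableOn a (Set.Ioi 0))
    (R : ℝ → H →L[ℂ] H)
    (hR : ∀ s : ℝ, 0 ≤ s →
      R s ∘L (T + ((a s : ℂ)) • 1) = 1 ∧ (T + ((a s : ℂ)) • 1) ∘L R s = 1)
    (u : ℝ → H)
    (hu : ∀ t : ℝ, u t =
      ∫ s in Set.Ioc (0 : ℝ) t, Real.exp (-(t - s)) • (R s ((adjoint A) f))) :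
    Tendsto (fun t : ℝ => ‖u t - y‖) atTop (𝓝 0) :=
  dsm_third_version_convergence_general A T hT y f hf hy a hpos hcont hlim R hR u hu
end

section
/- Under the assumptions of the third DSM version with noisy data: if ‖f_δ − f‖ ≤ δ and u_δ(t) = ∫_0^t e^{−(t−s)}(T+a(s)I)^{-1} A* f_δ ds, u(t) the solution with exact data f, then ‖u_δ(t) − u(t)‖ ≤ δ/(2√(a(t))) for all t ≥ 0. -/
/-! The difference `u_δ(t) - u(t)` is the same integral with data `f_δ - f`. Its integrand at `s`
has norm at most `e^{-(t-s)} ‖f_δ - f‖ / (2√a(s)) ≤ e^{-(t-s)} δ / (2√a(t))`, since `a` is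
nonincreasing, and `∫₀ᵗ e^{-(t-s)} ds = 1 - e^{-t} ≤ 1`. -/

open ContinuousLinearMap Filter Topology MeasureTheory

/-- Testing the equation against `w` gives `‖A w‖² + α‖w‖² = re ⟪A w, g⟫ ≤ ‖A w‖ ‖g‖`, and
`‖A w‖ ‖g‖ - ‖A w‖² ≤ ‖g‖² / 4`. -/
theorem norm_le_of_adjoint_comp_add_smul_eq {𝕜 E F : Type*} [RCLike 𝕜]
    [NormedAddCommGroup E] [InnerProductSpace 𝕜 E] [CompleteSpace E]
    [NormedAddCommGroup F] [InnerProductSpace 𝕜 F] [CompleteSpace F]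
    (A : E →L[𝕜] F) {α : ℝ} (hα : 0 < α) {w : E} {g : F}
    (hw : adjoint A (A w) + (α : 𝕜) • w = adjoint A g) :
    ‖w‖ ≤ ‖g‖ / (2 * Real.sqrt α) := by
  have hinner : ‖A w‖ ^ 2 + α * ‖w‖ ^ 2 = RCLike.re (inner 𝕜 (A w) g) := by
    have h := congrArg (fun v => RCLike.re (inner 𝕜 w v)) hw
    simp only [inner_add_right, inner_smul_right, adjoint_inner_right, map_add,
      inner_self_eq_norm_sq_to_K, ← RCLike.ofReal_pow, RCLike.re_ofReal_mul,
      RCLike.ofReal_re] at h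
    exact h
  have hcs : RCLike.re (inner 𝕜 (A w) g) ≤ ‖A w‖ * ‖g‖ :=
    (RCLike.re_le_norm _).trans (norm_inner_le_norm _ _)
  have hsq : (2 * Real.sqrt α * ‖w‖) ^ 2 ≤ ‖g‖ ^ 2 := by
    rw [mul_pow, mul_pow, Real.sq_sqrt hα.le]
    nlinarith [sq_nonneg (2 * ‖A w‖ - ‖g‖)]
  rw [le_div_iff₀ (by positivity), mul_comm]
  exact pow_le_pow_iff_left₀ (by positivity) (norm_nonneg g) two_ne_zero |>.mp hsq

theorem norm_apply_adjoint_le_of_comp_eq_one {𝕜 E F : Type*} [RCLike 𝕜]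
    [NormedAddCommGroup E] [InnerProductSpace 𝕜 E] [CompleteSpace E]
    [NormedAddCommGroup F] [InnerProductSpace 𝕜 F] [CompleteSpace F]
    (A : E →L[𝕜] F) {α : ℝ} (hα : 0 < α) {Rα : E →L[𝕜] E}
    (hRα : (adjoint A ∘L A + (α : 𝕜) • 1) ∘L Rα = 1) (g : F) :
    ‖Rα (adjoint A g)‖ ≤ ‖g‖ / (2 * Real.sqrt α) :=
  norm_le_of_adjoint_comp_add_smul_eq A hα <| by
    simpa using congrArg (· (adjoint A g)) hRα

theorem ContinuousOn.of_mul_eq_one {R X : Type*} [NormedRing R] [HasSummableGeomSeries R]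
    [TopologicalSpace X] {S : Set X} {L M : X → R} (hL : ContinuousOn L S)
    (hinv : ∀ x ∈ S, M x * L x = 1 ∧ L x * M x = 1) : ContinuousOn M S := by
  have hM : ∀ x ∈ S, M x = Ring.inverse (L x) := fun x hx =>
    (Ring.inverse_unit ⟨L x, M x, (hinv x hx).2, (hinv x hx).1⟩).symm
  refine ContinuousOn.congr (fun x hx => ?_) hM
  obtain ⟨u, hu⟩ : IsUnit (L x) := ⟨⟨L x, M x, (hinv x hx).2, (hinv x hx).1⟩, rfl⟩
  exact (hu ▸ NormedRing.inverse_continuousAt u).comp_continuousWithinAt (hL x hx)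

theorem setIntegral_Ioc_exp_neg_sub {t : ℝ} (ht : 0 ≤ t) :
    ∫ s in Set.Ioc 0 t, Real.exp (-(t - s)) = 1 - Real.exp (-t) := by
  rw [← intervalIntegral.integral_of_le ht]
  simp only [neg_sub]
  rw [intervalIntegral.integral_comp_sub_right Real.exp t, integral_exp]
  simp

theorem integrableOn_Ioc_exp_neg_sub_smul {E : Type*} [NormedAddCommGroup E]
    [NormedSpace ℝ E] {t : ℝ} {G : ℝ → E} (hG : ContinuousOn G (Set.Icc 0 t)) :
    IntegrableOn (fun s => Real.exp (-(t - s)) • G s) (Set.Ioc 0 t) :=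
  ((by fun_prop : Continuous fun s => Real.exp (-(t - s))).continuousOn.smul
    hG).integrableOn_Icc.mono_set Set.Ioc_subset_Icc_self

theorem norm_setIntegral_Ioc_exp_neg_sub_smul_le {E : Type*} [NormedAddCommGroup E]
    [NormedSpace ℝ E] {t M : ℝ} (ht : 0 ≤ t) {F : ℝ → E}
    (hF : ∀ s ∈ Set.Ioc 0 t, ‖F s‖ ≤ M) :
    ‖∫ s in Set.Ioc 0 t, Real.exp (-(t - s)) • F s‖ ≤ (1 - Real.exp (-t)) * M := by
  have hexp : IntegrableOn (fun s => Real.exp (-(t - s))) (Set.Ioc 0 t) :=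
    (by fun_prop : Continuous fun s => Real.exp (-(t - s))).integrableOn_Icc.mono_set
      Set.Ioc_subset_Icc_self
  rw [← setIntegral_Ioc_exp_neg_sub ht, ← integral_mul_const]
  refine norm_integral_le_of_norm_le (hexp.mul_const M) ?_
  refine (ae_restrict_iff' measurableSet_Ioc).2 (Eventually.of_forall fun s hs => ?_)
  rw [norm_smul, Real.norm_of_nonneg (Real.exp_pos _).le]
  exact mul_le_mul_of_nonneg_left (hF s hs) (Real.exp_pos _).le

theorem dsm_third_version_noise_estimate_general
    {H : Type*} [NormedAddCommGroup H] [InnerProductSpace ℂ H] [CompleteSpace H]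
    (A : H →L[ℂ] H) (T : H →L[ℂ] H) (hT : T = (adjoint A) ∘L A)
    (f fδ : H) (δ : ℝ) (hnoise : ‖fδ - f‖ ≤ δ)
    (a : ℝ → ℝ)
    (hpos : ∀ t : ℝ, 0 ≤ t → 0 < a t)
    (hcont : ContinuousOn a (Set.Ici 0))
    (hmono : AntitoneOn a (Set.Ici 0))
    (R : ℝ → H →L[ℂ] H)
    (hR : ∀ s : ℝ, 0 ≤ s →
      R s ∘L (T + ((a s : ℂ)) • 1) = 1 ∧ (T + ((a s : ℂ)) • 1) ∘L R s = 1)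
    (u uδ : ℝ → H)
    (hu : ∀ t : ℝ, u t =
      ∫ s in Set.Ioc (0 : ℝ) t, Real.exp (-(t - s)) • (R s ((adjoint A) f)))
    (huδ : ∀ t : ℝ, uδ t =
      ∫ s in Set.Ioc (0 : ℝ) t, Real.exp (-(t - s)) • (R s ((adjoint A) fδ))) :
    ∀ t : ℝ, 0 ≤ t → ‖uδ t - u t‖ ≤ δ / (2 * Real.sqrt (a t)) := by
  intro t ht
  have hδ : 0 ≤ δ := (norm_nonneg _).trans hnoise
  have hat := hpos t ht
  have hRcont : ContinuousOn R (Set.Ici 0) := ContinuousOn.of_mul_eq_one (by fun_prop) hR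
  have hint (v : H) : IntegrableOn (fun s => Real.exp (-(t - s)) • R s v) (Set.Ioc 0 t) :=
    integrableOn_Ioc_exp_neg_sub_smul
      ((hRcont.mono Set.Icc_subset_Ici_self).clm_apply continuousOn_const)
  have hdiff : uδ t - u t =
      ∫ s in Set.Ioc 0 t, Real.exp (-(t - s)) • R s (adjoint A (fδ - f)) := by
    rw [huδ, hu, ← integral_sub (hint _) (hint _)]
    simp only [map_sub, smul_sub]
  have hbound : ∀ s ∈ Set.Ioc 0 t, ‖R s (adjoint A (fδ - f))‖ ≤ δ / (2 * Real.sqrt (a t)) := by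
    rintro s ⟨hs, hst⟩
    calc ‖R s (adjoint A (fδ - f))‖ ≤ ‖fδ - f‖ / (2 * Real.sqrt (a s)) :=
          norm_apply_adjoint_le_of_comp_eq_one A (hpos s hs.le) (hT ▸ (hR s hs.le).2) _
      _ ≤ δ / (2 * Real.sqrt (a t)) := by
          gcongr
          exact hmono (Set.mem_Ici.2 hs.le) (Set.mem_Ici.2 ht) hst
  have hM : 0 ≤ δ / (2 * Real.sqrt (a t)) := by positivity
  rw [hdiff]
  refine (norm_setIntegral_Ioc_exp_neg_sub_smul_le ht hbound).trans ?_
  nlinarith [Real.exp_pos (-t)]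

/-- Noisy-data estimate for the third DSM version: if `‖f_δ − f‖ ≤ δ` then
`‖u_δ(t) − u(t)‖ ≤ δ/(2√(a(t)))` for all `t ≥ 0`. -/
theorem dsm_third_version_noise_estimate
    {H : Type*} [NormedAddCommGroup H] [InnerProductSpace ℂ H] [CompleteSpace H]
    (A : H →L[ℂ] H) (T : H →L[ℂ] H) (hT : T = (adjoint A) ∘L A)
    (f fδ : H) (δ : ℝ) (hδ : 0 ≤ δ) (hnoise : ‖fδ - f‖ ≤ δ)
    (a : ℝ → ℝ)
    (hpos : ∀ t : ℝ, 0 ≤ t → 0 < a t)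
    (hcont : ContinuousOn a (Set.Ici 0))
    (hmono : AntitoneOn a (Set.Ici 0))
    (R : ℝ → H →L[ℂ] H)
    (hR : ∀ s : ℝ, 0 ≤ s →
      R s ∘L (T + ((a s : ℂ)) • 1) = 1 ∧ (T + ((a s : ℂ)) • 1) ∘L R s = 1)
    (u uδ : ℝ → H)
    (hu : ∀ t : ℝ, u t =
      ∫ s in Set.Ioc (0 : ℝ) t, Real.exp (-(t - s)) • (R s ((adjoint A) f)))
    (huδ : ∀ t : ℝ, uδ t =
      ∫ s in Set.Ioc (0 : ℝ) t, Real.exp (-(t - s)) • (R s ((adjoint A) fδ))) :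
    ∀ t : ℝ, 0 ≤ t → ‖uδ t - u t‖ ≤ δ / (2 * Real.sqrt (a t)) :=
  dsm_third_version_noise_estimate_general A T hT f fδ δ hnoise a hpos hcont hmono R hR u uδ hu huδ
end

section
/- Let T ≥ 0 be a bounded selfadjoint operator on H, a > 0, B = a(T+aI)^{-1}, and w ∈ H with w ⊥ N(T). Then lim_{n→∞} ‖Bⁿ w‖ = 0. -/
/-!
The resolvent `B = a(T + a)⁻¹` of an accretive operator `T` is firmly nonexpansive,
`‖B y‖² ≤ Re⟪B y, y⟫`, which is equivalent to `‖y - B y‖² ≤ ‖y‖² - ‖B y‖²`.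
Telescoping this along an orbit gives `∑ₙ ‖Bⁿ (B v - v)‖² ≤ ‖v‖²`, so `Bⁿ → 0`
pointwise on the range of `B - 1`. The powers `Bⁿ` are contractions, so this persists
on the closure of that range, which is the orthogonal complement of the fixed points
of `B`; these lie in `N(T)`.
-/

open ContinuousLinearMap Filter Topology

section

variable {𝕜 E : Type*} [RCLike 𝕜] [NormedAddCommGroup E] [InnerProductSpace 𝕜 E]

/-- For linear maps this is firm nonexpansiveness,
`‖B x - B y‖² ≤ Re⟪B x - B y, x - y⟫`. -/
def ContinuousLinearMap.IsFirmlyNonexpansive (B : E →L[𝕜] E) : Prop :=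
  ∀ y, ‖B y‖ ^ 2 ≤ RCLike.re (inner 𝕜 (B y) y)

namespace ContinuousLinearMap.IsFirmlyNonexpansive

variable {B : E →L[𝕜] E}

theorem norm_apply_le (hB : B.IsFirmlyNonexpansive) (y : E) : ‖B y‖ ≤ ‖y‖ := by
  have h := (hB y).trans ((RCLike.re_le_norm _).trans (norm_inner_le_norm (𝕜 := 𝕜) (B y) y))
  nlinarith [norm_nonneg (B y), norm_nonneg y]

theorem lipschitzWith_pow (hB : B.IsFirmlyNonexpansive) (n : ℕ) :
    LipschitzWith 1 ⇑(B ^ n) := by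
  have hB1 : LipschitzWith 1 B := by
    simpa using B.lipschitz.weaken <|
      B.opNorm_le_bound zero_le_one fun y => by simpa using hB.norm_apply_le y
  simpa [FunLike.coe_pow_eq_iterate] using hB1.iterate n

theorem sq_norm_sub_apply_le (hB : B.IsFirmlyNonexpansive) (y : E) :
    ‖y - B y‖ ^ 2 ≤ ‖y‖ ^ 2 - ‖B y‖ ^ 2 := by
  rw [norm_sub_sq (𝕜 := 𝕜), inner_re_symm]
  linarith [hB y]

theorem apply_eq_of_mem_orthogonal_range (hB : B.IsFirmlyNonexpansive) {u : E}
    (hu : u ∈ (LinearMap.range (↑(B - 1) : E →ₗ[𝕜] E))ᗮ) : B u = u := by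
  refine eq_of_norm_le_re_inner_eq_norm_sq (𝕜 := 𝕜) (hB.norm_apply_le u) ?_
  have : inner 𝕜 (B u) u = inner 𝕜 u u := by
    simpa [inner_sub_left, sub_eq_zero] using
      (Submodule.mem_orthogonal _ _).1 hu (B u - u) ⟨u, rfl⟩
  rw [this, inner_self_eq_norm_sq]

theorem tendsto_pow_apply_sub_apply (hB : B.IsFirmlyNonexpansive) (v : E) :
    Tendsto (fun n => (B ^ n) (B v - v)) atTop (𝓝 0) := by
  set s : ℕ → ℝ := fun n => ‖(B ^ n) v‖ ^ 2
  have hstep (n : ℕ) : ‖(B ^ n) (B v - v)‖ ^ 2 ≤ s n - s (n + 1) := by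
    have hcomm : (B ^ n) (B v) = B ((B ^ n) v) := by
      rw [← mul_apply_eq_comp, ← pow_succ, pow_succ', mul_apply_eq_comp]
    rw [map_sub, hcomm, norm_sub_rev]
    simpa only [s, pow_succ', mul_apply_eq_comp] using hB.sq_norm_sub_apply_le ((B ^ n) v)
  have hsum : Summable fun n => ‖(B ^ n) (B v - v)‖ ^ 2 :=
    summable_of_sum_range_le (c := s 0) (fun n => by positivity) fun n => calc
      _ ≤ ∑ i ∈ Finset.range n, (s i - s (i + 1)) := Finset.sum_le_sum fun i _ => hstep i
      _ = s 0 - s n := Finset.sum_range_sub' s n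
      _ ≤ s 0 := by simp only [s]; linarith [sq_nonneg ‖(B ^ n) v‖]
  rw [tendsto_zero_iff_norm_tendsto_zero]
  simpa using hsum.tendsto_atTop_zero.sqrt

theorem tendsto_pow_apply_of_mem_closure_range (hB : B.IsFirmlyNonexpansive) {w : E}
    (hw : w ∈ closure (LinearMap.range (↑(B - 1) : E →ₗ[𝕜] E) : Set E)) :
    Tendsto (fun n => (B ^ n) w) atTop (𝓝 0) := by
  have hclosed : IsClosed {x | Tendsto (fun n => (B ^ n) x) atTop (𝓝 0)} :=
    (LipschitzWith.uniformEquicontinuous _ 1 hB.lipschitzWith_pow).equicontinuous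
      |>.isClosed_setOfPred_tendsto continuous_const
  refine closure_minimal ?_ hclosed hw
  rintro _ ⟨v, rfl⟩
  exact hB.tendsto_pow_apply_sub_apply v

theorem tendsto_pow_apply_of_forall_isFixedPt_inner_eq_zero [CompleteSpace E]
    (hB : B.IsFirmlyNonexpansive) {w : E}
    (hw : ∀ u, B u = u → inner 𝕜 u w = 0) : Tendsto (fun n => (B ^ n) w) atTop (𝓝 0) := by
  refine hB.tendsto_pow_apply_of_mem_closure_range ?_
  rw [← Submodule.topologicalClosure_coe, ← Submodule.orthogonal_orthogonal_eq_closure]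
  exact fun u hu => hw u (hB.apply_eq_of_mem_orthogonal_range hu)

end ContinuousLinearMap.IsFirmlyNonexpansive

theorem isFirmlyNonexpansive_smul_of_comp_eq_one {T R : E →L[𝕜] E} {a : ℝ} (ha : 0 ≤ a)
    (hT : ∀ x, 0 ≤ RCLike.re (inner 𝕜 (T x) x)) (hR : (T + (a : 𝕜) • 1) ∘L R = 1) :
    ((a : 𝕜) • R).IsFirmlyNonexpansive := by
  intro y
  have hy : T (R y) + (a : 𝕜) • R y = y := by simpa using congr($hR y)
  calc ‖((a : 𝕜) • R) y‖ ^ 2 = a ^ 2 * ‖R y‖ ^ 2 := by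
        rw [smul_apply, norm_smul, RCLike.norm_ofReal, abs_of_nonneg ha, mul_pow]
    _ ≤ a * RCLike.re (inner 𝕜 (T (R y)) (R y)) + a ^ 2 * ‖R y‖ ^ 2 :=
        le_add_of_nonneg_left (mul_nonneg ha (hT _))
    _ = RCLike.re (inner 𝕜 (((a : 𝕜) • R) y) (T (R y) + (a : 𝕜) • R y)) := by
        rw [smul_apply, inner_smul_left, RCLike.conj_ofReal, RCLike.re_ofReal_mul, inner_add_right,
          map_add, inner_smul_right, RCLike.re_ofReal_mul, inner_re_symm, inner_self_eq_norm_sq]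
        ring
    _ = RCLike.re (inner 𝕜 (((a : 𝕜) • R) y) y) := by rw [hy]

theorem apply_eq_zero_of_isFixedPt_smul_of_comp_eq_one {T R : E →L[𝕜] E} {a : 𝕜}
    (hR : (T + a • 1) ∘L R = 1) {u : E} (hu : (a • R) u = u) : T u = 0 := by
  have hRu : T (R u) + a • R u = u := by simpa using congr($hR u)
  have h : T ((a • R) u) + a • (a • R) u = a • u := by
    rw [smul_apply, map_smul, ← smul_add, hRu]
  rw [hu] at h
  simpa using h

end

theorem iterates_tendsto_zero_general
    {H : Type*} [NormedAddCommGroup H] [InnerProductSpace ℂ H] [CompleteSpace H]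
    (T : H →L[ℂ] H)
    (hpos : ∀ x : H, 0 ≤ (inner ℂ (T x) x : ℂ).re)
    (a : ℝ) (ha : 0 < a)
    (Tinv : H →L[ℂ] H)
    (h₂ : (T + (a : ℂ) • 1) ∘L Tinv = 1)
    (B : H →L[ℂ] H) (hBdef : B = (a : ℂ) • Tinv)
    (w : H) (hw : ∀ u : H, T u = 0 → (inner ℂ u w : ℂ) = 0) :
    Tendsto (fun n : ℕ => ‖(B ^ n) w‖) atTop (𝓝 0) := by
  subst hBdef
  have hB := isFirmlyNonexpansive_smul_of_comp_eq_one ha.le hpos h₂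
  refine tendsto_zero_iff_norm_tendsto_zero.1 <|
    hB.tendsto_pow_apply_of_forall_isFixedPt_inner_eq_zero fun u hu => ?_
  exact hw u (apply_eq_zero_of_isFixedPt_smul_of_comp_eq_one h₂ hu)

/-- For nonnegative bounded selfadjoint `T`, `a > 0`, `B = a(T+aI)⁻¹`, and `w ⊥ N(T)`,
one has `‖Bⁿ w‖ → 0`. -/
theorem iterates_tendsto_zero
    {H : Type*} [NormedAddCommGroup H] [InnerProductSpace ℂ H] [CompleteSpace H]
    (T : H →L[ℂ] H) (hT : IsSelfAdjoint T)
    (hpos : ∀ x : H, 0 ≤ (inner ℂ (T x) x : ℂ).re)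
    (a : ℝ) (ha : 0 < a)
    (Tinv : H →L[ℂ] H)
    (h₁ : Tinv ∘L (T + (a : ℂ) • 1) = 1) (h₂ : (T + (a : ℂ) • 1) ∘L Tinv = 1)
    (B : H →L[ℂ] H) (hBdef : B = (a : ℂ) • Tinv)
    (w : H) (hw : ∀ u : H, T u = 0 → (inner ℂ u w : ℂ) = 0) :
    Tendsto (fun n : ℕ => ‖(B ^ n) w‖) atTop (𝓝 0) :=
  iterates_tendsto_zero_general T hpos a ha Tinv h₂ B hBdef w hw
end

section
/- Let A be a bounded operator on H, T = A*A, a > 0, B = a(T+aI)^{-1}, f = Ay with y ⊥ N(A). Define the iteration u_{n+1} = B u_n + (T+aI)^{-1} A* f with u_1 ⊥ N(A). Then lim_{n→∞} ‖u_n − y‖ = 0. -/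
/-!
The error `u (n + 1) - y` equals `Bⁿ v` with `v = u 1 - y`, because `Tinv (A* A y) = (1 - B) y`.
Since `B = (1 + a⁻¹ T)⁻¹` with `T ≥ 0`, we have `0 ≤ B ≤ 1`, so `cₙ = re ⟪Bⁿ v, v⟫` is
nonincreasing and nonnegative, hence convergent, and `‖Bⁿ v - Bᵐ v‖² = c₂ₙ - 2 cₙ₊ₘ + c₂ₘ`
makes `Bⁿ v` a Cauchy sequence. Its limit `z` is fixed by `B`, so `z ∈ N(T) = N(A)`; then
`⟪z, Bⁿ v⟫ = ⟪z, v⟫ = 0` for all `n`, and in the limit `⟪z, z⟫ = 0`.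
-/
open ContinuousLinearMap Filter Topology
open scoped InnerProductSpace

namespace ContinuousLinearMap

variable {H : Type*} [NormedAddCommGroup H] [InnerProductSpace ℂ H] [CompleteSpace H]
  {B : H →L[ℂ] H}

lemma inner_pow_apply_left (hB : IsSelfAdjoint B) (n : ℕ) (x y : H) :
    ⟪(B ^ n) x, y⟫_ℂ = ⟪x, (B ^ n) y⟫_ℂ :=
  (hB.pow n).isSymmetric x y

lemma norm_pow_apply_sub_pow_apply_sq (hB : IsSelfAdjoint B) (v : H) (n m : ℕ) :
    ‖(B ^ n) v - (B ^ m) v‖ ^ 2 =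
      RCLike.re ⟪(B ^ (2 * n)) v, v⟫_ℂ - 2 * RCLike.re ⟪(B ^ (n + m)) v, v⟫_ℂ
        + RCLike.re ⟪(B ^ (2 * m)) v, v⟫_ℂ := by
  have hinner (k l : ℕ) : ⟪(B ^ k) v, (B ^ l) v⟫_ℂ = ⟪(B ^ (k + l)) v, v⟫_ℂ := by
    rw [inner_pow_apply_left hB, ← mul_apply_eq_comp, ← pow_add, ← inner_pow_apply_left hB]
  rw [norm_sub_sq (𝕜 := ℂ), norm_sq_eq_re_inner (𝕜 := ℂ), norm_sq_eq_re_inner (𝕜 := ℂ), hinner,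
    hinner, hinner, ← two_mul n, ← two_mul m]

variable (hB₀ : 0 ≤ B) (hB₁ : B ≤ 1)
include hB₀ hB₁

lemma antitone_re_inner_pow_apply (v : H) : Antitone fun n ↦ RCLike.re ⟪(B ^ n) v, v⟫_ℂ := by
  intro m n hmn
  have := ((le_def _ _).1 (CStarAlgebra.pow_antitone hB₀ hB₁ hmn)).re_inner_nonneg_left v
  simpa [sub_apply, inner_sub_left] using this

lemma cauchySeq_pow_apply (v : H) : CauchySeq fun n ↦ (B ^ n) v := by
  set c : ℕ → ℝ := fun n ↦ RCLike.re ⟪(B ^ n) v, v⟫_ℂ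
  have hc₀ (n : ℕ) : 0 ≤ c n :=
    ((nonneg_iff_isPositive _).1 (CStarAlgebra.pow_nonneg hB₀ n)).re_inner_nonneg_left v
  obtain ⟨L, hL⟩ : ∃ L, Tendsto c atTop (𝓝 L) :=
    ⟨_, tendsto_atTop_ciInf (antitone_re_inner_pow_apply hB₀ hB₁ v) ⟨0, by
      rintro _ ⟨n, rfl⟩; exact hc₀ n⟩⟩
  have hlim {f : ℕ × ℕ → ℕ} (hf : ∀ p, min p.1 p.2 ≤ f p) :
      Tendsto (fun p ↦ c (f p)) atTop (𝓝 L) :=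
    hL.comp <| tendsto_atTop_atTop.2 fun N ↦ ⟨(N, N), fun p hp ↦ (le_min hp.1 hp.2).trans (hf p)⟩
  have hsq : Tendsto (fun p : ℕ × ℕ ↦ dist ((B ^ p.1) v) ((B ^ p.2) v) ^ 2) atTop (𝓝 0) := by
    simp_rw [dist_eq_norm, norm_pow_apply_sub_pow_apply_sq (IsSelfAdjoint.of_nonneg hB₀)]
    convert ((hlim (f := fun p ↦ 2 * p.1) (by omega)).sub
      ((hlim (f := fun p ↦ p.1 + p.2) (by omega)).const_mul 2)).add
      (hlim (f := fun p ↦ 2 * p.2) (by omega)) using 2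
    ring
  rw [cauchySeq_iff_tendsto_dist_atTop_0]
  simpa using hsq.sqrt

theorem tendsto_pow_apply_zero_of_inner_fixedPoint_eq_zero {v : H}
    (hv : ∀ z, B z = z → ⟪z, v⟫_ℂ = 0) : Tendsto (fun n ↦ (B ^ n) v) atTop (𝓝 0) := by
  obtain ⟨z, hz⟩ := cauchySeq_tendsto_of_complete (cauchySeq_pow_apply hB₀ hB₁ v)
  have hBz : B z = z := by
    have hshift : Tendsto (fun n ↦ B ((B ^ n) v)) atTop (𝓝 z) := by
      simpa only [Function.comp_def, pow_succ', mul_apply_eq_comp]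
        using hz.comp (tendsto_add_atTop_nat 1)
    exact tendsto_nhds_unique ((B.continuous.tendsto z).comp hz) hshift
  have hzv (n : ℕ) : ⟪z, (B ^ n) v⟫_ℂ = 0 := by
    rw [← inner_pow_apply_left (IsSelfAdjoint.of_nonneg hB₀), FunLike.coe_pow_eq_iterate,
      Function.IsFixedPt.iterate hBz n, hv z hBz]
  have hzz : ⟪z, z⟫_ℂ = 0 :=
    tendsto_nhds_unique (tendsto_const_nhds.inner hz) (by simp only [hzv, tendsto_const_nhds])
  rwa [inner_self_eq_zero.1 hzz] at hz

end ContinuousLinearMap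

section Regularization

variable {A : Type*} {T R : A} {a : ℝ}

lemma one_sub_smul_eq_mul [Ring A] [Algebra ℂ A] (h : R * (T + (a : ℂ) • 1) = 1) :
    1 - (a : ℂ) • R = R * T := by
  rw [← h, mul_add, mul_smul_comm, mul_one, add_sub_cancel_right]

lemma smul_nonneg_and_le_one_of_mul_eq_one [CStarAlgebra A] [PartialOrder A] [StarOrderedRing A]
    (hT : 0 ≤ T) (ha : 0 < a) (h₁ : R * (T + (a : ℂ) • 1) = 1) (h₂ : (T + (a : ℂ) • 1) * R = 1) :
    0 ≤ (a : ℂ) • R ∧ (a : ℂ) • R ≤ 1 := by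
  -- `a • R` is the inverse of the unit `1 + a⁻¹ • T ≥ 1`.
  have ha' : (a : ℂ) ≠ 0 := Complex.ofReal_ne_zero.2 ha.ne'
  let W : Aˣ :=
    { val := (a : ℂ)⁻¹ • (T + (a : ℂ) • 1)
      inv := (a : ℂ) • R
      val_inv := by rw [smul_mul_smul_comm, inv_mul_cancel₀ ha', h₂, one_smul]
      inv_val := by rw [smul_mul_smul_comm, mul_inv_cancel₀ ha', h₁, one_smul] }
  have hW : 1 ≤ (W : A) := by
    change 1 ≤ (a : ℂ)⁻¹ • (T + (a : ℂ) • 1)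
    rw [smul_add, smul_smul, inv_mul_cancel₀ ha', one_smul, ← Complex.ofReal_inv, Complex.coe_smul]
    exact le_add_of_nonneg_left (smul_nonneg (inv_nonneg.2 ha.le) hT)
  exact ⟨CFC.inv_nonneg_of_nonneg W (zero_le_one.trans hW), CStarAlgebra.inv_le_one hW⟩

end Regularization

lemma apply_eq_zero_of_smul_apply_eq_self {H : Type*} [NormedAddCommGroup H]
    [InnerProductSpace ℂ H] {T R : H →L[ℂ] H} {a : ℝ}
    (h₁ : R * (T + (a : ℂ) • 1) = 1) (h₂ : (T + (a : ℂ) • 1) * R = 1) {z : H}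
    (hz : ((a : ℂ) • R) z = z) : T z = 0 := by
  have hRT : R (T z) = 0 := by
    rw [← mul_apply_eq_comp, ← one_sub_smul_eq_mul h₁, sub_apply, one_apply_eq_self, hz, sub_self]
  rw [← one_apply_eq_self (F := H →L[ℂ] H) (T z), ← h₂, mul_apply_eq_comp, hRT, map_zero]

/-- Iterative process `u_{n+1} = B u_n + (T+aI)⁻¹ A* f`, `B = a(T+aI)⁻¹`, `u₁ ⊥ N(A)`,
`f = Ay`, `y ⊥ N(A)`: then `‖u_n − y‖ → 0`. -/
theorem iteration_converges
    {H : Type*} [NormedAddCommGroup H] [InnerProductSpace ℂ H] [CompleteSpace H]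
    (A : H →L[ℂ] H) (T : H →L[ℂ] H) (hT : T = (adjoint A) ∘L A)
    (a : ℝ) (ha : 0 < a)
    (Tinv : H →L[ℂ] H)
    (h₁ : Tinv ∘L (T + (a : ℂ) • 1) = 1) (h₂ : (T + (a : ℂ) • 1) ∘L Tinv = 1)
    (B : H →L[ℂ] H) (hBdef : B = (a : ℂ) • Tinv)
    (y f : H) (hf : f = A y)
    (hy : ∀ v : H, A v = 0 → (inner ℂ v y : ℂ) = 0)
    (u : ℕ → H)
    (hu1 : ∀ v : H, A v = 0 → (inner ℂ v (u 1) : ℂ) = 0)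
    (hrec : ∀ n : ℕ, 1 ≤ n → u (n + 1) = B (u n) + Tinv ((adjoint A) f)) :
    Tendsto (fun n : ℕ => ‖u n - y‖) atTop (𝓝 0) := by
  subst hT hBdef hf
  have hT₀ : 0 ≤ adjoint A ∘L A := (nonneg_iff_isPositive _).2 (isPositive_adjoint_comp_self A)
  obtain ⟨hB₀, hB₁⟩ := smul_nonneg_and_le_one_of_mul_eq_one hT₀ ha h₁ h₂
  have hstep : Tinv (adjoint A (A y)) = y - ((a : ℂ) • Tinv) y :=
    (congrArg (fun F : H →L[ℂ] H ↦ F y) (one_sub_smul_eq_mul h₁)).symm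
  have herr (n : ℕ) : u (n + 1) - y = (((a : ℂ) • Tinv) ^ n) (u 1 - y) := by
    induction n with
    | zero => simp
    | succ n ih =>
      rw [hrec _ n.succ_pos, hstep, pow_succ', mul_apply_eq_comp, ← ih, map_sub]
      abel
  have hv (z : H) (hz : ((a : ℂ) • Tinv) z = z) : ⟪z, u 1 - y⟫_ℂ = 0 := by
    have hAz : A z = 0 := by
      have hker : z ∈ (adjoint A ∘L A : H →ₗ[ℂ] H).ker :=
        apply_eq_zero_of_smul_apply_eq_self h₁ h₂ hz
      rwa [ker_adjoint_comp_self] at hker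
    rw [inner_sub_right, hu1 z hAz, hy z hAz, sub_zero]
  have hlim := (tendsto_pow_apply_zero_of_inner_fixedPoint_eq_zero hB₀ hB₁ hv).norm
  rw [norm_zero] at hlim
  rw [← tendsto_add_atTop_iff_nat 1]
  exact hlim.congr fun n ↦ congrArg norm (herr n).symm
end
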